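/- arXiv:1804.07232 — 5 statements merged into one kernel-verified Lean document; each statement's English description precedes it below -/
import Mathlib

section
/- For even n ≥ 6 and any 2 ≤ i ≤ n-2, the lobster tree A_iB displays both Ω_A and Ω_B. -/
namespace PP

/-- A vertex is a leaf (degree at most one) if it has at most one neighbour. -/
def IsLeafVert {V : Type} (G : SimpleGraph V) (w : V) : Prop :=
  ∀ w₁ w₂ : V, G.Adj w w₁ → G.Adj w w₂ → w₁ = w₂

/-- A (finite, unrooted) phylogenetic tree on a label set `X ⊆ L`:
its leaves are bijectively labelled by the elements of `X`. -/
structure PhyloTree {L : Type} (X : Set L) where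
  V : Type
  finV : Finite V
  G : SimpleGraph V
  isTree : G.IsTree
  leaf : L → V
  leaf_injOn : Set.InjOn leaf X
  leaf_isLeaf : ∀ x ∈ X, IsLeafVert G (leaf x)
  leaf_surj : ∀ w, IsLeafVert G w → ∃ x ∈ X, leaf x = w

/-- The vertex set of the minimal subtree `T[S]` spanning the leaves labelled by `S ∩ X`. -/
def subtree {L : Type} {X : Set L} (T : PhyloTree X) (S : Set L) : Set T.V :=
  {w | ∃ x ∈ S ∩ X, ∃ y ∈ S ∩ X,
        ∃ p : T.G.Walk (T.leaf x) (T.leaf y), p.IsPath ∧ w ∈ p.support}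

/-- `T` displays the character `χ` (a state assignment, whose nonempty fibres on `X`
are the states) if the minimal subtrees spanning distinct states are vertex-disjoint. -/
def displays {L : Type} {X : Set L} (T : PhyloTree X) (χ : L → ℕ) : Prop :=
  ∀ s t : ℕ, s ≠ t → Disjoint (subtree T {x | χ x = s}) (subtree T {x | χ x = t})

/-- A set of characters is compatible if some tree on `X` displays all of them. -/
def compatible {L : Type} (X : Set L) (C : Set (L → ℕ)) : Prop :=
  ∃ T : PhyloTree X, ∀ χ ∈ C, displays T χ

/-- Labels: `(false, i)` is `aᵢ`, `(true, i)` is `bᵢ`. -/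
abbrev Lbl : Type := Bool × ℕ

def a (i : ℕ) : Lbl := (false, i)
def b (i : ℕ) : Lbl := (true, i)

/-- `X = {a₁,…,aₙ,b₁,…,bₙ}`. -/
def Xset (n : ℕ) : Set Lbl := {p | 1 ≤ p.2 ∧ p.2 ≤ n}

/-- `X_{≤ i} = {aⱼ, bⱼ : 1 ≤ j ≤ i}`. -/
def XLE (i : ℕ) : Set Lbl := {p | 1 ≤ p.2 ∧ p.2 ≤ i}

/-- χ_j = X_{≤j-2} | a_{j-1} | b_{j-1} | a_j a_{j+1} | b_j b_{j+1} | a_{j+2} | b_{j+2} | X_{≥j+3} -/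
def chi (j : ℕ) : Lbl → ℕ := fun p =>
  if p.2 + 2 ≤ j then 0
  else if p.2 + 1 = j then cond p.1 2 1
  else if p.2 ≤ j + 1 then cond p.1 4 3
  else if p.2 = j + 2 then cond p.1 6 5
  else 7

def phiMain (j i : ℕ) : ℕ :=
  if i < j then 0 else if i = j then 3 else if i = j + 1 then 4 else 5

def phiSide (j i : ℕ) : ℕ :=
  if i + 3 ≤ j then 0 else if i + 2 = j then 1 else if i + 1 = j then 2 else 5

/-- For even j: φ_j = X_{≤j-3}∪{b_{j-2},b_{j-1}} | a_{j-2} | a_{j-1} | b_j | b_{j+1} | {a_j,a_{j+1}}∪X_{≥j+2};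
for odd j the roles of a and b are swapped. -/
def phi (j : ℕ) : Lbl → ℕ := fun p =>
  if j % 2 = 0 then cond p.1 (phiMain j p.2) (phiSide j p.2)
  else cond p.1 (phiSide j p.2) (phiMain j p.2)

/-- Ω_A = a₁b₁b₂ | {a₂} ∪ X_{≥3}. -/
def OmA : Lbl → ℕ := fun p =>
  cond p.1 (if p.2 ≤ 2 then 0 else 1) (if p.2 = 1 then 0 else 1)

/-- Ω_B = X_{≤n-2} ∪ {b_{n-1}} | a_{n-1} aₙ bₙ. -/
def OmB (n : ℕ) : Lbl → ℕ := fun p =>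
  cond p.1 (if p.2 = n then 1 else 0) (if p.2 + 1 ≥ n then 1 else 0)

/-- The edges of the lobster `A_iB`: central path a₁,u₁,…,u_{i-1},u_A,u_B,u_{i+1},…,u_{n-1},bₙ;
edges u_k v_k for k ≠ i; if i is even, u_A is adjacent to aᵢ and u_B to b_{i+1};
if i is odd, u_A is adjacent to bᵢ and u_B to a_{i+1}; for k < i, v_k is adjacent to
b_k,b_{k+1} (k odd) or a_k,a_{k+1} (k even); for k > i the a/b roles are swapped. -/
def AdjSpecMid (n i : ℕ) {X : Set Lbl} (T : PhyloTree X) (u v : ℕ → T.V)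
    (uA uB : T.V) (w w' : T.V) : Prop :=
  (w = T.leaf (a 1) ∧ w' = u 1) ∨
  (∃ k, 1 ≤ k ∧ k + 1 ≤ i - 1 ∧ w = u k ∧ w' = u (k + 1)) ∨
  (w = u (i - 1) ∧ w' = uA) ∨
  (w = uA ∧ w' = uB) ∨
  (w = uB ∧ w' = u (i + 1)) ∨
  (∃ k, i + 1 ≤ k ∧ k + 1 ≤ n - 1 ∧ w = u k ∧ w' = u (k + 1)) ∨
  (w = u (n - 1) ∧ w' = T.leaf (b n)) ∨
  (∃ k, 1 ≤ k ∧ k ≤ n - 1 ∧ k ≠ i ∧ w = u k ∧ w' = v k) ∨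
  (i % 2 = 0 ∧ w = uA ∧ w' = T.leaf (a i)) ∨
  (i % 2 = 0 ∧ w = uB ∧ w' = T.leaf (b (i + 1))) ∨
  (i % 2 = 1 ∧ w = uA ∧ w' = T.leaf (b i)) ∨
  (i % 2 = 1 ∧ w = uB ∧ w' = T.leaf (a (i + 1))) ∨
  (∃ k, 1 ≤ k ∧ k < i ∧ k % 2 = 1 ∧ w = v k ∧
      (w' = T.leaf (b k) ∨ w' = T.leaf (b (k + 1)))) ∨
  (∃ k, 1 ≤ k ∧ k < i ∧ k % 2 = 0 ∧ w = v k ∧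
      (w' = T.leaf (a k) ∨ w' = T.leaf (a (k + 1)))) ∨
  (∃ k, i < k ∧ k ≤ n - 1 ∧ k % 2 = 1 ∧ w = v k ∧
      (w' = T.leaf (a k) ∨ w' = T.leaf (a (k + 1)))) ∨
  (∃ k, i < k ∧ k ≤ n - 1 ∧ k % 2 = 0 ∧ w = v k ∧
      (w' = T.leaf (b k) ∨ w' = T.leaf (b (k + 1))))

/-- `T`, with internal vertices `u k`, `v k` (k ∈ [n-1] \ {i}) and `uA`, `uB`,
is the lobster `A_iB`. -/
def IsLobsterMid (n i : ℕ) (T : PhyloTree (Xset n)) (u v : ℕ → T.V) (uA uB : T.V) : Prop :=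
  (∀ k l, 1 ≤ k → k ≤ n - 1 → k ≠ i → 1 ≤ l → l ≤ n - 1 → l ≠ i →
      (u k = u l → k = l) ∧ (v k = v l → k = l) ∧ u k ≠ v l ∧
      u k ≠ uA ∧ u k ≠ uB ∧ v k ≠ uA ∧ v k ≠ uB) ∧
  uA ≠ uB ∧
  (∀ p ∈ Xset n, T.leaf p ≠ uA ∧ T.leaf p ≠ uB ∧
      ∀ k, 1 ≤ k → k ≤ n - 1 → k ≠ i → T.leaf p ≠ u k ∧ T.leaf p ≠ v k) ∧
  (∀ w : T.V, (∃ p ∈ Xset n, T.leaf p = w) ∨ w = uA ∨ w = uB ∨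
      (∃ k, 1 ≤ k ∧ k ≤ n - 1 ∧ k ≠ i ∧ (u k = w ∨ v k = w))) ∧
  (∀ w w' : T.V, T.G.Adj w w' ↔
      (AdjSpecMid n i T u v uA uB w w' ∨ AdjSpecMid n i T u v uA uB w' w))


section Aux
open SimpleGraph

def WalkIn {V : Type} (G : SimpleGraph V) (W : Set V) (x y : V) : Prop :=
  ∃ p : G.Walk x y, ∀ z ∈ p.support, z ∈ W

lemma WalkIn.mono {V : Type} {G : SimpleGraph V} {W W' : Set V} (hW : W ⊆ W') {x y : V}
    (h : WalkIn G W x y) : WalkIn G W' x y := by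
  obtain ⟨p, hp⟩ := h; exact ⟨p, fun z hz => hW (hp z hz)⟩

lemma WalkIn.symm {V : Type} {G : SimpleGraph V} {W : Set V} {x y : V}
    (h : WalkIn G W x y) : WalkIn G W y x := by
  obtain ⟨p, hp⟩ := h
  exact ⟨p.reverse, fun z hz => hp z (by simpa using hz)⟩

lemma WalkIn.trans {V : Type} {G : SimpleGraph V} {W : Set V} {x y z : V}
    (h : WalkIn G W x y) (h' : WalkIn G W y z) : WalkIn G W x z := by
  obtain ⟨p, hp⟩ := h; obtain ⟨q, hq⟩ := h'
  refine ⟨p.append q, fun w hw => ?_⟩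
  rcases (SimpleGraph.Walk.mem_support_append_iff _ _).1 hw with h | h
  · exact hp _ h
  · exact hq _ h

lemma WalkIn.cons {V : Type} {G : SimpleGraph V} {W : Set V} {x y z : V}
    (hxy : G.Adj x y) (hx : x ∈ W) (h : WalkIn G W y z) : WalkIn G W x z := by
  obtain ⟨p, hp⟩ := h
  refine ⟨SimpleGraph.Walk.cons hxy p, fun w hw => ?_⟩
  rcases (by simpa using hw : w = x ∨ w ∈ p.support) with rfl | h
  · exact hx
  · exact hp _ h

lemma WalkIn.refl {V : Type} {G : SimpleGraph V} {W : Set V} {x : V} (hx : x ∈ W) :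
    WalkIn G W x x := ⟨SimpleGraph.Walk.nil, by simpa using hx⟩

lemma WalkIn.single {V : Type} {G : SimpleGraph V} {W : Set V} {x y : V}
    (hxy : G.Adj x y) (hx : x ∈ W) (hy : y ∈ W) : WalkIn G W x y :=
  WalkIn.cons hxy hx (WalkIn.refl hy)

lemma path_support_in {V : Type} {G : SimpleGraph V} (hT : G.IsTree) {W : Set V} {x y : V}
    (hw : WalkIn G W x y) {p : G.Walk x y} (hp : p.IsPath) : ∀ z ∈ p.support, z ∈ W := by
  classical
  obtain ⟨q, hq⟩ := hw
  have huniq := hT.existsUnique_path x y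
  have h1 : p = q.bypass := huniq.unique hp q.bypass_isPath
  intro z hz
  exact hq z (q.support_bypass_subset (h1 ▸ hz))

lemma subtree_subset {L : Type} {X : Set L} (T : PhyloTree X) (S : Set L) (W : Set T.V)
    (hw : ∀ x ∈ S ∩ X, ∀ y ∈ S ∩ X, WalkIn T.G W (T.leaf x) (T.leaf y)) :
    subtree T S ⊆ W := by
  rintro w ⟨x, hx, y, hy, p, hp, hw'⟩
  exact path_support_in T.isTree (hw x hx y hy) hp w hw'

lemma subtree_empty {L : Type} {X : Set L} (T : PhyloTree X) (S : Set L)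
    (hS : ∀ x ∈ X, x ∉ S) : subtree T S = ∅ := by
  ext w
  simp only [Set.mem_empty_iff_false, iff_false]
  rintro ⟨x, ⟨hxS, hxX⟩, -⟩
  exact hS x hxX hxS

end Aux

set_option maxHeartbeats 2000000 in
theorem lobsterMid_displays_Omegas (n i : ℕ) (hn : Even n) (hn6 : 6 ≤ n)
    (hi : 2 ≤ i) (hi' : i ≤ n - 2)
    (T : PhyloTree (Xset n)) (u v : ℕ → T.V) (uA uB : T.V)
    (h : IsLobsterMid n i T u v uA uB) :
    displays T OmA ∧ displays T (OmB n) := by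
  classical
  obtain ⟨hdist, hABne, hleaf, hsurj, hadj⟩ := h
  have hn2 : n % 2 = 0 := Nat.even_iff.mp hn
  have adjC : ∀ w w', AdjSpecMid n i T u v uA uB w w' → T.G.Adj w w' :=
    fun w w' hs => (hadj w w').2 (Or.inl hs)
  -- adjacency facts
  have A1 : T.G.Adj (T.leaf (a 1)) (u 1) := adjC _ _ (Or.inl ⟨rfl, rfl⟩)
  have AuL : ∀ k, 1 ≤ k → k + 1 ≤ i - 1 → T.G.Adj (u k) (u (k+1)) :=
    fun k h1 h2 => adjC _ _ (Or.inr (Or.inl ⟨k, h1, h2, rfl, rfl⟩))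
  have AuiA : T.G.Adj (u (i-1)) uA :=
    adjC _ _ (Or.inr (Or.inr (Or.inl ⟨rfl, rfl⟩)))
  have AAB : T.G.Adj uA uB :=
    adjC _ _ (Or.inr (Or.inr (Or.inr (Or.inl ⟨rfl, rfl⟩))))
  have ABu : T.G.Adj uB (u (i+1)) :=
    adjC _ _ (Or.inr (Or.inr (Or.inr (Or.inr (Or.inl ⟨rfl, rfl⟩)))))
  have AuR : ∀ k, i+1 ≤ k → k+1 ≤ n-1 → T.G.Adj (u k) (u (k+1)) :=
    fun k h1 h2 => adjC _ _ (Or.inr (Or.inr (Or.inr (Or.inr (Or.inr (Or.inl ⟨k, h1, h2, rfl, rfl⟩))))))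
  have Aubn : T.G.Adj (u (n-1)) (T.leaf (b n)) :=
    adjC _ _ (Or.inr (Or.inr (Or.inr (Or.inr (Or.inr (Or.inr (Or.inl ⟨rfl, rfl⟩)))))))
  have Auv : ∀ k, 1 ≤ k → k ≤ n-1 → k ≠ i → T.G.Adj (u k) (v k) :=
    fun k h1 h2 h3 => adjC _ _ (Or.inr (Or.inr (Or.inr (Or.inr (Or.inr (Or.inr (Or.inr (Or.inl ⟨k, h1, h2, h3, rfl, rfl⟩))))))))
  have AAa : i % 2 = 0 → T.G.Adj uA (T.leaf (a i)) :=
    fun hp => adjC _ _ (Or.inr (Or.inr (Or.inr (Or.inr (Or.inr (Or.inr (Or.inr (Or.inr (Or.inl ⟨hp, rfl, rfl⟩)))))))))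
  have ABb : i % 2 = 0 → T.G.Adj uB (T.leaf (b (i+1))) :=
    fun hp => adjC _ _ (Or.inr (Or.inr (Or.inr (Or.inr (Or.inr (Or.inr (Or.inr (Or.inr (Or.inr (Or.inl ⟨hp, rfl, rfl⟩))))))))))
  have AAb : i % 2 = 1 → T.G.Adj uA (T.leaf (b i)) :=
    fun hp => adjC _ _ (Or.inr (Or.inr (Or.inr (Or.inr (Or.inr (Or.inr (Or.inr (Or.inr (Or.inr (Or.inr (Or.inl ⟨hp, rfl, rfl⟩)))))))))))
  have ABa : i % 2 = 1 → T.G.Adj uB (T.leaf (a (i+1))) :=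
    fun hp => adjC _ _ (Or.inr (Or.inr (Or.inr (Or.inr (Or.inr (Or.inr (Or.inr (Or.inr (Or.inr (Or.inr (Or.inr (Or.inl ⟨hp, rfl, rfl⟩))))))))))))
  have AvLb : ∀ k, 1 ≤ k → k < i → k % 2 = 1 → ∀ w', (w' = T.leaf (b k) ∨ w' = T.leaf (b (k+1))) → T.G.Adj (v k) w' :=
    fun k h1 h2 h3 w' hw => adjC _ _ (Or.inr (Or.inr (Or.inr (Or.inr (Or.inr (Or.inr (Or.inr (Or.inr (Or.inr (Or.inr (Or.inr (Or.inr (Or.inl ⟨k, h1, h2, h3, rfl, hw⟩)))))))))))))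
  have AvLa : ∀ k, 1 ≤ k → k < i → k % 2 = 0 → ∀ w', (w' = T.leaf (a k) ∨ w' = T.leaf (a (k+1))) → T.G.Adj (v k) w' :=
    fun k h1 h2 h3 w' hw => adjC _ _ (Or.inr (Or.inr (Or.inr (Or.inr (Or.inr (Or.inr (Or.inr (Or.inr (Or.inr (Or.inr (Or.inr (Or.inr (Or.inr (Or.inl ⟨k, h1, h2, h3, rfl, hw⟩))))))))))))))
  have AvRa : ∀ k, i < k → k ≤ n-1 → k % 2 = 1 → ∀ w', (w' = T.leaf (a k) ∨ w' = T.leaf (a (k+1))) → T.G.Adj (v k) w' :=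
    fun k h1 h2 h3 w' hw => adjC _ _ (Or.inr (Or.inr (Or.inr (Or.inr (Or.inr (Or.inr (Or.inr (Or.inr (Or.inr (Or.inr (Or.inr (Or.inr (Or.inr (Or.inr (Or.inl ⟨k, h1, h2, h3, rfl, hw⟩)))))))))))))))
  have AvRb : ∀ k, i < k → k ≤ n-1 → k % 2 = 0 → ∀ w', (w' = T.leaf (b k) ∨ w' = T.leaf (b (k+1))) → T.G.Adj (v k) w' :=
    fun k h1 h2 h3 w' hw => adjC _ _ (Or.inr (Or.inr (Or.inr (Or.inr (Or.inr (Or.inr (Or.inr (Or.inr (Or.inr (Or.inr (Or.inr (Or.inr (Or.inr (Or.inr (Or.inr ⟨k, h1, h2, h3, rfl, hw⟩)))))))))))))))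
  -- spine walks
  have spineL : ∀ d k, k + d = i - 1 → 1 ≤ k →
      WalkIn T.G {z | z = uA ∨ ∃ m, k ≤ m ∧ m ≤ i-1 ∧ z = u m} (u k) uA := by
    intro d
    induction d with
    | zero =>
      intro k hk h1
      have hk' : k = i - 1 := by omega
      subst hk'
      exact WalkIn.single AuiA (Or.inr ⟨i-1, le_refl _, le_refl _, rfl⟩) (Or.inl rfl)
    | succ d ih =>
      intro k hk h1
      have h2 : k + 1 ≤ i - 1 := by omega
      refine WalkIn.cons (AuL k h1 h2) (Or.inr ⟨k, le_refl _, by omega, rfl⟩)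
        ((ih (k+1) (by omega) (by omega)).mono ?_)
      rintro z (rfl | ⟨m, hm1, hm2, rfl⟩)
      · exact Or.inl rfl
      · exact Or.inr ⟨m, by omega, hm2, rfl⟩
  have spineR : ∀ k, i+1 ≤ k → k ≤ n-1 →
      WalkIn T.G {z | z = uB ∨ ∃ m, i+1 ≤ m ∧ m ≤ k ∧ z = u m} (u k) uB := by
    intro k hk
    induction k, hk using Nat.le_induction with
    | base =>
      intro _
      exact WalkIn.single ABu.symm (Or.inr ⟨i+1, le_refl _, le_refl _, rfl⟩) (Or.inl rfl)
    | succ k hk ih =>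
      intro h
      refine WalkIn.cons (AuR k hk (by omega)).symm (Or.inr ⟨k+1, by omega, le_refl _, rfl⟩)
        ((ih (by omega)).mono ?_)
      rintro z (rfl | ⟨m, hm1, hm2, rfl⟩)
      · exact Or.inl rfl
      · exact Or.inr ⟨m, hm1, by omega, rfl⟩
  -- the middle set
  set M : Set T.V :=
      {z | z = uA ∨ z = uB ∨ ∃ k, 2 ≤ k ∧ k ≤ n-2 ∧ k ≠ i ∧ (z = u k ∨ z = v k)} with hM
  have memA : uA ∈ M := Or.inl rfl
  have memB : uB ∈ M := Or.inr (Or.inl rfl)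
  have memu : ∀ k, 2 ≤ k → k ≤ n-2 → k ≠ i → u k ∈ M :=
    fun k h1 h2 h3 => Or.inr (Or.inr ⟨k, h1, h2, h3, Or.inl rfl⟩)
  have memv : ∀ k, 2 ≤ k → k ≤ n-2 → k ≠ i → v k ∈ M :=
    fun k h1 h2 h3 => Or.inr (Or.inr ⟨k, h1, h2, h3, Or.inr rfl⟩)
  have MspineL : ∀ k, 2 ≤ k → k ≤ i - 1 → WalkIn T.G M (u k) uB := by
    intro k h1 h2
    refine ((spineL (i-1-k) k (by omega) (by omega)).mono ?_).trans
      (WalkIn.single AAB memA memB)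
    rintro z (rfl | ⟨m, hm1, hm2, rfl⟩)
    · exact memA
    · exact memu m (by omega) (by omega) (by omega)
  have MspineR : ∀ k, i+1 ≤ k → k ≤ n-2 → WalkIn T.G M (u k) uB := by
    intro k h1 h2
    refine (spineR k h1 (by omega)).mono ?_
    rintro z (rfl | ⟨m, hm1, hm2, rfl⟩)
    · exact memB
    · exact memu m (by omega) (by omega) (by omega)
  -- core attachment lemma
  have core : ∀ (c : Bool) (j : ℕ), 2 ≤ j → j ≤ n-2 → (c = true → 3 ≤ j) →
      WalkIn T.G (insert (T.leaf (c, j)) M) (T.leaf ((c, j) : Lbl)) uB := by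
    intro c j h2 h3 hc
    have hMsub : M ⊆ insert (T.leaf ((c, j) : Lbl)) M := Set.subset_insert _ _
    have hlm : T.leaf ((c, j) : Lbl) ∈ insert (T.leaf ((c, j) : Lbl)) M := Set.mem_insert _ _
    cases c with
    | false =>
      by_cases hji : j ≤ i
      · by_cases hp : j % 2 = 0
        · by_cases hje : j = i
          · subst hje
            exact WalkIn.cons (AAa hp).symm hlm
              (WalkIn.single AAB (hMsub memA) (hMsub memB))
          · refine WalkIn.cons (AvLa j (by omega) (by omega) hp _ (Or.inl rfl)).symm hlm
              (WalkIn.cons (Auv j (by omega) (by omega) (by omega)).symm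
                (hMsub (memv j h2 h3 (by omega)))
                ((MspineL j h2 (by omega)).mono hMsub))
        · -- j odd, j ≤ i : attach to v (j-1)
          have h3' : 3 ≤ j := by omega
          have hA : T.G.Adj (v (j-1)) (T.leaf (a ((j-1)+1))) :=
            AvLa (j-1) (by omega) (by omega) (by omega) _ (Or.inr rfl)
          rw [show j - 1 + 1 = j from by omega] at hA
          refine WalkIn.cons hA.symm hlm
            (WalkIn.cons (Auv (j-1) (by omega) (by omega) (by omega)).symm
              (hMsub (memv (j-1) (by omega) (by omega) (by omega)))
              ((MspineL (j-1) (by omega) (by omega)).mono hMsub))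
      · -- j > i
        by_cases hp : j % 2 = 1
        · refine WalkIn.cons (AvRa j (by omega) (by omega) hp _ (Or.inl rfl)).symm hlm
            (WalkIn.cons (Auv j (by omega) (by omega) (by omega)).symm
              (hMsub (memv j h2 h3 (by omega)))
              ((MspineR j (by omega) h3).mono hMsub))
        · by_cases hje : j = i + 1
          · have hio : i % 2 = 1 := by omega
            subst hje
            exact WalkIn.single (ABa hio).symm hlm (hMsub memB)
          · have hA : T.G.Adj (v (j-1)) (T.leaf (a ((j-1)+1))) :=
              AvRa (j-1) (by omega) (by omega) (by omega) _ (Or.inr rfl)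
            rw [show j - 1 + 1 = j from by omega] at hA
            refine WalkIn.cons hA.symm hlm
              (WalkIn.cons (Auv (j-1) (by omega) (by omega) (by omega)).symm
                (hMsub (memv (j-1) (by omega) (by omega) (by omega)))
                ((MspineR (j-1) (by omega) (by omega)).mono hMsub))
    | true =>
      have h3' : 3 ≤ j := hc rfl
      by_cases hji : j ≤ i
      · by_cases hp : j % 2 = 1
        · by_cases hje : j = i
          · subst hje
            exact WalkIn.cons (AAb hp).symm hlm
              (WalkIn.single AAB (hMsub memA) (hMsub memB))
          · refine WalkIn.cons (AvLb j (by omega) (by omega) hp _ (Or.inl rfl)).symm hlm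
              (WalkIn.cons (Auv j (by omega) (by omega) (by omega)).symm
                (hMsub (memv j h2 h3 (by omega)))
                ((MspineL j h2 (by omega)).mono hMsub))
        · have hA : T.G.Adj (v (j-1)) (T.leaf (b ((j-1)+1))) :=
            AvLb (j-1) (by omega) (by omega) (by omega) _ (Or.inr rfl)
          rw [show j - 1 + 1 = j from by omega] at hA
          refine WalkIn.cons hA.symm hlm
            (WalkIn.cons (Auv (j-1) (by omega) (by omega) (by omega)).symm
              (hMsub (memv (j-1) (by omega) (by omega) (by omega)))
              ((MspineL (j-1) (by omega) (by omega)).mono hMsub))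
      · by_cases hp : j % 2 = 0
        · refine WalkIn.cons (AvRb j (by omega) (by omega) hp _ (Or.inl rfl)).symm hlm
            (WalkIn.cons (Auv j (by omega) (by omega) (by omega)).symm
              (hMsub (memv j h2 h3 (by omega)))
              ((MspineR j (by omega) h3).mono hMsub))
        · by_cases hje : j = i + 1
          · have hie : i % 2 = 0 := by omega
            subst hje
            exact WalkIn.single (ABb hie).symm hlm (hMsub memB)
          · have hA : T.G.Adj (v (j-1)) (T.leaf (b ((j-1)+1))) :=
              AvRb (j-1) (by omega) (by omega) (by omega) _ (Or.inr rfl)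
            rw [show j - 1 + 1 = j from by omega] at hA
            refine WalkIn.cons hA.symm hlm
              (WalkIn.cons (Auv (j-1) (by omega) (by omega) (by omega)).symm
                (hMsub (memv (j-1) (by omega) (by omega) (by omega)))
                ((MspineR (j-1) (by omega) (by omega)).mono hMsub))
  -- generic helpers
  have memX : ∀ (c : Bool) (j : ℕ), 1 ≤ j → j ≤ n → ((c, j) : Lbl) ∈ Xset n :=
    fun _ j h1 h2 => ⟨h1, h2⟩
  have labne : ∀ (c : Bool) (j : ℕ) (c' : Bool) (j' : ℕ), 1 ≤ j → j ≤ n → 1 ≤ j' → j' ≤ n →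
      ¬(c = c' ∧ j = j') → T.leaf (c, j) ≠ T.leaf ((c', j') : Lbl) := by
    intro c j c' j' h1 h2 h1' h2' hne he
    have := T.leaf_injOn (memX c j h1 h2) (memX c' j' h1' h2') he
    rw [Prod.ext_iff] at this
    exact hne this
  have hlf : ∀ (c : Bool) (j : ℕ), 1 ≤ j → j ≤ n →
      T.leaf (c, j) ≠ uA ∧ T.leaf (c, j) ≠ uB ∧
      ∀ k, 1 ≤ k → k ≤ n - 1 → k ≠ i → T.leaf (c, j) ≠ u k ∧ T.leaf (c, j) ≠ v k :=
    fun c j h1 h2 => hleaf _ (memX c j h1 h2)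
  have valA : ∀ x : Lbl, OmA x = 0 ∨ OmA x = 1 := by
    rintro ⟨c, j⟩
    cases c <;> simp only [OmA, Bool.cond_false, Bool.cond_true] <;> split_ifs <;> simp
  have valB : ∀ x : Lbl, OmB n x = 0 ∨ OmB n x = 1 := by
    rintro ⟨c, j⟩
    cases c <;> simp only [OmB, Bool.cond_false, Bool.cond_true] <;> split_ifs <;> simp
  ---------------------------------------------------------------- OmA
  set W0 : Set T.V := {T.leaf (a 1), u 1, v 1, T.leaf (b 1), T.leaf (b 2)} with hW0
  have ma1 : T.leaf (a 1) ∈ W0 := by rw [hW0]; simp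
  have mu1 : u 1 ∈ W0 := by rw [hW0]; simp
  have mv1 : v 1 ∈ W0 := by rw [hW0]; simp
  have mb1 : T.leaf (b 1) ∈ W0 := by rw [hW0]; simp
  have mb2 : T.leaf (b 2) ∈ W0 := by rw [hW0]; simp
  have ncW0 : ∀ z : T.V, z ≠ T.leaf (a 1) → z ≠ u 1 → z ≠ v 1 → z ≠ T.leaf (b 1) →
      z ≠ T.leaf (b 2) → z ∈ W0ᶜ := by
    intro z h1 h2 h3 h4 h5
    rw [hW0]
    simp only [Set.mem_compl_iff, Set.mem_insert_iff, Set.mem_singleton_iff]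
    push_neg
    exact ⟨h1, h2, h3, h4, h5⟩
  have ncu : ∀ k, 2 ≤ k → k ≤ n-1 → k ≠ i → u k ∈ W0ᶜ := by
    intro k h1 h2 h3
    have hd := hdist k 1 (by omega) h2 h3 (by omega) (by omega) (by omega)
    exact ncW0 _ (fun he => ((hlf false 1 (by omega) (by omega)).2.2 k (by omega) h2 h3).1 he.symm)
      (fun he => by have := hd.1 he; omega) hd.2.2.1
      (fun he => ((hlf true 1 (by omega) (by omega)).2.2 k (by omega) h2 h3).1 he.symm)
      (fun he => ((hlf true 2 (by omega) (by omega)).2.2 k (by omega) h2 h3).1 he.symm)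
  have ncv : ∀ k, 2 ≤ k → k ≤ n-1 → k ≠ i → v k ∈ W0ᶜ := by
    intro k h1 h2 h3
    have hd := hdist k 1 (by omega) h2 h3 (by omega) (by omega) (by omega)
    have hd' := hdist 1 k (by omega) (by omega) (by omega) (by omega) h2 h3
    exact ncW0 _ (fun he => ((hlf false 1 (by omega) (by omega)).2.2 k (by omega) h2 h3).2 he.symm)
      (fun he => hd'.2.2.1 he.symm)
      (fun he => by have := hd.2.1 he; omega)
      (fun he => ((hlf true 1 (by omega) (by omega)).2.2 k (by omega) h2 h3).2 he.symm)
      (fun he => ((hlf true 2 (by omega) (by omega)).2.2 k (by omega) h2 h3).2 he.symm)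
  have ncA : uA ∈ W0ᶜ := by
    have hd := hdist 1 1 (by omega) (by omega) (by omega) (by omega) (by omega) (by omega)
    exact ncW0 _ (fun he => (hlf false 1 (by omega) (by omega)).1 he.symm)
      (fun he => hd.2.2.2.1 he.symm) (fun he => hd.2.2.2.2.2.1 he.symm)
      (fun he => (hlf true 1 (by omega) (by omega)).1 he.symm)
      (fun he => (hlf true 2 (by omega) (by omega)).1 he.symm)
  have ncB : uB ∈ W0ᶜ := by
    have hd := hdist 1 1 (by omega) (by omega) (by omega) (by omega) (by omega) (by omega)
    exact ncW0 _ (fun he => (hlf false 1 (by omega) (by omega)).2.1 he.symm)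
      (fun he => hd.2.2.2.2.1 he.symm) (fun he => hd.2.2.2.2.2.2 he.symm)
      (fun he => (hlf true 1 (by omega) (by omega)).2.1 he.symm)
      (fun he => (hlf true 2 (by omega) (by omega)).2.1 he.symm)
  have ncleafA : ∀ (c : Bool) (j : ℕ), 1 ≤ j → j ≤ n → ¬(c = false ∧ j = 1) →
      ¬(c = true ∧ j ≤ 2) → T.leaf (c, j) ∈ W0ᶜ := by
    intro c j h1 h2 hna hnb
    have hl := hlf c j h1 h2
    exact ncW0 _ (labne c j false 1 h1 h2 (by omega) (by omega) (fun h => hna ⟨h.1, h.2⟩))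
      ((hl.2.2 1 (by omega) (by omega) (by omega)).1)
      ((hl.2.2 1 (by omega) (by omega) (by omega)).2)
      (labne c j true 1 h1 h2 (by omega) (by omega) (fun h => hnb ⟨h.1, by omega⟩))
      (labne c j true 2 h1 h2 (by omega) (by omega) (fun h => hnb ⟨h.1, by omega⟩))
  have hMW0 : M ⊆ W0ᶜ := by
    rintro z (rfl | rfl | ⟨k, h1, h2, h3, (rfl | rfl)⟩)
    · exact ncA
    · exact ncB
    · exact ncu k h1 (by omega) h3
    · exact ncv k h1 (by omega) h3
  have to0A : ∀ x ∈ {x | OmA x = 0} ∩ Xset n, WalkIn T.G W0 (T.leaf x) (v 1) := by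
    rintro ⟨c, j⟩ ⟨hx, hj1, hjn⟩
    simp only [Set.mem_setOf_eq] at hx
    cases c with
    | false =>
      simp only [OmA, Bool.cond_false] at hx
      have hj : j = 1 := by split_ifs at hx with h; exact h
      subst hj
      exact WalkIn.cons A1 ma1 (WalkIn.single (Auv 1 (by omega) (by omega) (by omega)) mu1 mv1)
    | true =>
      simp only [OmA, Bool.cond_true] at hx
      have hj : j = 1 ∨ j = 2 := by split_ifs at hx with h; omega
      rcases hj with rfl | rfl
      · exact (WalkIn.single (AvLb 1 (by omega) (by omega) (by omega) _ (Or.inl rfl)) mv1 mb1).symm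
      · exact (WalkIn.single (AvLb 1 (by omega) (by omega) (by omega) _ (Or.inr rfl)) mv1 mb2).symm
  have to1A : ∀ x ∈ {x | OmA x = 1} ∩ Xset n, WalkIn T.G W0ᶜ (T.leaf x) uB := by
    rintro ⟨c, j⟩ ⟨hx, hj1, hjn⟩
    simp only [Set.mem_setOf_eq] at hx
    cases c with
    | false =>
      simp only [OmA, Bool.cond_false] at hx
      have hj2 : 2 ≤ j := by split_ifs at hx with h; omega
      by_cases hsm : j ≤ n - 2
      · refine (core false j hj2 hsm (by simp)).mono ?_
        intro z hz
        rcases Set.mem_insert_iff.1 hz with rfl | hz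
        · exact ncleafA false j hj1 hjn (by simp; omega) (by simp)
        · exact hMW0 hz
      · have hj' : j = n - 1 ∨ j = n := by omega
        rcases hj' with h' | h'
        · subst h'
          have hA := AvRa (n-1) (by omega) (by omega) (by omega) _ (Or.inl rfl)
          refine WalkIn.cons hA.symm
            (ncleafA false (n-1) (by omega) (by omega) (by simp; omega) (by simp))
            (WalkIn.cons (Auv (n-1) (by omega) (by omega) (by omega)).symm
              (ncv (n-1) (by omega) (by omega) (by omega)) ?_)
          refine (spineR (n-1) (by omega) (by omega)).mono ?_
          rintro z (rfl | ⟨m, hm1, hm2, rfl⟩)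
          · exact ncB
          · exact ncu m (by omega) (by omega) (by omega)
        · rw [h']
          have hA := AvRa (n-1) (by omega) (by omega) (by omega) _ (Or.inr rfl)
          rw [show n - 1 + 1 = n from by omega] at hA
          refine WalkIn.cons hA.symm
            (ncleafA false n (by omega) (by omega) (by simp; omega) (by simp))
            (WalkIn.cons (Auv (n-1) (by omega) (by omega) (by omega)).symm
              (ncv (n-1) (by omega) (by omega) (by omega)) ?_)
          refine (spineR (n-1) (by omega) (by omega)).mono ?_
          rintro z (rfl | ⟨m, hm1, hm2, rfl⟩)
          · exact ncB
          · exact ncu m (by omega) (by omega) (by omega)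
    | true =>
      simp only [OmA, Bool.cond_true] at hx
      have hj3 : 3 ≤ j := by split_ifs at hx with h; omega
      by_cases hsm : j ≤ n - 2
      · refine (core true j (by omega) hsm (fun _ => hj3)).mono ?_
        intro z hz
        rcases Set.mem_insert_iff.1 hz with rfl | hz
        · exact ncleafA true j hj1 hjn (by simp) (by simp; omega)
        · exact hMW0 hz
      · have hj' : j = n - 1 ∨ j = n := by omega
        rcases hj' with h' | h'
        · subst h'
          by_cases hin : i = n - 2
          · have hie : i % 2 = 0 := by omega
            have hA := ABb hie
            rw [show i + 1 = n - 1 from by omega] at hA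
            exact (WalkIn.single hA ncB
              (ncleafA true (n-1) (by omega) (by omega) (by simp) (by simp; omega))).symm
          · have hA := AvRb (n-2) (by omega) (by omega) (by omega) _ (Or.inr rfl)
            rw [show n - 2 + 1 = n - 1 from by omega] at hA
            refine WalkIn.cons hA.symm
              (ncleafA true (n-1) (by omega) (by omega) (by simp) (by simp; omega))
              (WalkIn.cons (Auv (n-2) (by omega) (by omega) (by omega)).symm
                (ncv (n-2) (by omega) (by omega) (by omega)) ?_)
            refine (spineR (n-2) (by omega) (by omega)).mono ?_
            rintro z (rfl | ⟨m, hm1, hm2, rfl⟩)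
            · exact ncB
            · exact ncu m (by omega) (by omega) (by omega)
        · rw [h']
          refine WalkIn.cons Aubn.symm
            (ncleafA true n (by omega) (by omega) (by simp) (by simp; omega)) ?_
          refine ((spineR (n-1) (by omega) (by omega)).mono ?_).symm.symm
          rintro z (rfl | ⟨m, hm1, hm2, rfl⟩)
          · exact ncB
          · exact ncu m (by omega) (by omega) (by omega)
  have dispA : displays T OmA := by
    intro s t hst
    have emp : ∀ r, r ≠ 0 → r ≠ 1 → subtree T {x | OmA x = r} = ∅ := by
      intro r h0 h1
      apply subtree_empty
      intro x _ hxS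
      simp only [Set.mem_setOf_eq] at hxS
      rcases valA x with h | h <;> omega
    have sub0 : subtree T {x | OmA x = 0} ⊆ W0 :=
      subtree_subset _ _ _ (fun x hx y hy => (to0A x hx).trans (to0A y hy).symm)
    have sub1 : subtree T {x | OmA x = 1} ⊆ W0ᶜ :=
      subtree_subset _ _ _ (fun x hx y hy => (to1A x hx).trans (to1A y hy).symm)
    by_cases hs0 : s = 0
    · subst hs0
      by_cases ht1 : t = 1
      · subst ht1; exact disjoint_compl_right.mono sub0 sub1
      · rw [emp t (Ne.symm hst) ht1]; exact Set.disjoint_empty _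
    · by_cases hs1 : s = 1
      · subst hs1
        by_cases ht0 : t = 0
        · subst ht0; exact (disjoint_compl_right.mono sub0 sub1).symm
        · rw [emp t ht0 (Ne.symm hst)]; exact Set.disjoint_empty _
      · rw [emp s hs0 hs1]; exact Set.empty_disjoint _
  ---------------------------------------------------------------- OmB
  set W1 : Set T.V := {T.leaf (b n), u (n-1), v (n-1), T.leaf (a (n-1)), T.leaf (a n)} with hW1
  have mbn : T.leaf (b n) ∈ W1 := by rw [hW1]; simp
  have mun1 : u (n-1) ∈ W1 := by rw [hW1]; simp
  have mvn1 : v (n-1) ∈ W1 := by rw [hW1]; simp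
  have man1 : T.leaf (a (n-1)) ∈ W1 := by rw [hW1]; simp
  have man : T.leaf (a n) ∈ W1 := by rw [hW1]; simp
  have ncW1 : ∀ z : T.V, z ≠ T.leaf (b n) → z ≠ u (n-1) → z ≠ v (n-1) → z ≠ T.leaf (a (n-1)) →
      z ≠ T.leaf (a n) → z ∈ W1ᶜ := by
    intro z h1 h2 h3 h4 h5
    rw [hW1]
    simp only [Set.mem_compl_iff, Set.mem_insert_iff, Set.mem_singleton_iff]
    push_neg
    exact ⟨h1, h2, h3, h4, h5⟩
  have ncu' : ∀ k, 1 ≤ k → k ≤ n-2 → k ≠ i → u k ∈ W1ᶜ := by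
    intro k h1 h2 h3
    have hd := hdist k (n-1) h1 (by omega) h3 (by omega) (by omega) (by omega)
    exact ncW1 _ (fun he => ((hlf true n (by omega) (by omega)).2.2 k h1 (by omega) h3).1 he.symm)
      (fun he => by have := hd.1 he; omega) hd.2.2.1
      (fun he => ((hlf false (n-1) (by omega) (by omega)).2.2 k h1 (by omega) h3).1 he.symm)
      (fun he => ((hlf false n (by omega) (by omega)).2.2 k h1 (by omega) h3).1 he.symm)
  have ncv' : ∀ k, 1 ≤ k → k ≤ n-2 → k ≠ i → v k ∈ W1ᶜ := by
    intro k h1 h2 h3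
    have hd := hdist k (n-1) h1 (by omega) h3 (by omega) (by omega) (by omega)
    have hd' := hdist (n-1) k (by omega) (by omega) (by omega) h1 (by omega) h3
    exact ncW1 _ (fun he => ((hlf true n (by omega) (by omega)).2.2 k h1 (by omega) h3).2 he.symm)
      (fun he => hd'.2.2.1 he.symm)
      (fun he => by have := hd.2.1 he; omega)
      (fun he => ((hlf false (n-1) (by omega) (by omega)).2.2 k h1 (by omega) h3).2 he.symm)
      (fun he => ((hlf false n (by omega) (by omega)).2.2 k h1 (by omega) h3).2 he.symm)
  have ncA' : uA ∈ W1ᶜ := by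
    have hd := hdist (n-1) (n-1) (by omega) (by omega) (by omega) (by omega) (by omega) (by omega)
    exact ncW1 _ (fun he => (hlf true n (by omega) (by omega)).1 he.symm)
      (fun he => hd.2.2.2.1 he.symm) (fun he => hd.2.2.2.2.2.1 he.symm)
      (fun he => (hlf false (n-1) (by omega) (by omega)).1 he.symm)
      (fun he => (hlf false n (by omega) (by omega)).1 he.symm)
  have ncB' : uB ∈ W1ᶜ := by
    have hd := hdist (n-1) (n-1) (by omega) (by omega) (by omega) (by omega) (by omega) (by omega)
    exact ncW1 _ (fun he => (hlf true n (by omega) (by omega)).2.1 he.symm)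
      (fun he => hd.2.2.2.2.1 he.symm) (fun he => hd.2.2.2.2.2.2 he.symm)
      (fun he => (hlf false (n-1) (by omega) (by omega)).2.1 he.symm)
      (fun he => (hlf false n (by omega) (by omega)).2.1 he.symm)
  have ncleafB : ∀ (c : Bool) (j : ℕ), 1 ≤ j → j ≤ n → ¬(c = true ∧ j = n) →
      ¬(c = false ∧ n - 1 ≤ j) → T.leaf (c, j) ∈ W1ᶜ := by
    intro c j h1 h2 hna hnb
    have hl := hlf c j h1 h2
    exact ncW1 _ (labne c j true n h1 h2 (by omega) (by omega) (fun h => hna ⟨h.1, h.2⟩))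
      ((hl.2.2 (n-1) (by omega) (by omega) (by omega)).1)
      ((hl.2.2 (n-1) (by omega) (by omega) (by omega)).2)
      (labne c j false (n-1) h1 h2 (by omega) (by omega) (fun h => hnb ⟨h.1, by omega⟩))
      (labne c j false n h1 h2 (by omega) (by omega) (fun h => hnb ⟨h.1, by omega⟩))
  have hMW1 : M ⊆ W1ᶜ := by
    rintro z (rfl | rfl | ⟨k, h1, h2, h3, (rfl | rfl)⟩)
    · exact ncA'
    · exact ncB'
    · exact ncu' k (by omega) h2 h3
    · exact ncv' k (by omega) h2 h3
  have to1B : ∀ x ∈ {x | OmB n x = 1} ∩ Xset n, WalkIn T.G W1 (T.leaf x) (v (n-1)) := by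
    rintro ⟨c, j⟩ ⟨hx, hj1, hjn⟩
    simp only [Set.mem_setOf_eq] at hx
    cases c with
    | true =>
      simp only [OmB, Bool.cond_true] at hx
      have hj : j = n := by split_ifs at hx with h; exact h
      rw [hj]
      exact WalkIn.cons Aubn.symm mbn
        (WalkIn.single (Auv (n-1) (by omega) (by omega) (by omega)) mun1 mvn1)
    | false =>
      simp only [OmB, Bool.cond_false] at hx
      have hj : n ≤ j + 1 := by split_ifs at hx with h; exact h
      have hj' : j = n - 1 ∨ j = n := by omega
      rcases hj' with h' | h'
      · subst h'
        exact (WalkIn.single (AvRa (n-1) (by omega) (by omega) (by omega) _ (Or.inl rfl))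
          mvn1 man1).symm
      · rw [h']
        have hA := AvRa (n-1) (by omega) (by omega) (by omega) _ (Or.inr rfl)
        rw [show n - 1 + 1 = n from by omega] at hA
        exact (WalkIn.single hA mvn1 man).symm
  have to0B : ∀ x ∈ {x | OmB n x = 0} ∩ Xset n, WalkIn T.G W1ᶜ (T.leaf x) uB := by
    rintro ⟨c, j⟩ ⟨hx, hj1, hjn⟩
    simp only [Set.mem_setOf_eq] at hx
    cases c with
    | false =>
      simp only [OmB, Bool.cond_false] at hx
      have hj2 : j ≤ n - 2 := by split_ifs at hx with h; omega
      by_cases hj1' : j = 1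
      · subst hj1'
        refine WalkIn.cons A1 (ncleafB false 1 (by omega) (by omega) (by simp) (by simp; omega)) ?_
        refine ((spineL (i-1-1) 1 (by omega) (by omega)).mono ?_).trans
          (WalkIn.single AAB ncA' ncB')
        rintro z (rfl | ⟨m, hm1, hm2, rfl⟩)
        · exact ncA'
        · exact ncu' m hm1 (by omega) (by omega)
      · refine (core false j (by omega) hj2 (by simp)).mono ?_
        intro z hz
        rcases Set.mem_insert_iff.1 hz with rfl | hz
        · exact ncleafB false j hj1 hjn (by simp) (by simp; omega)
        · exact hMW1 hz
    | true =>
      simp only [OmB, Bool.cond_true] at hx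
      have hjn' : j ≠ n := by split_ifs at hx with h; exact h
      by_cases hj2' : j ≤ 2
      · have hj : j = 1 ∨ j = 2 := by omega
        have hspine : WalkIn T.G W1ᶜ (u 1) uB := by
          refine ((spineL (i-1-1) 1 (by omega) (by omega)).mono ?_).trans
            (WalkIn.single AAB ncA' ncB')
          rintro z (rfl | ⟨m, hm1, hm2, rfl⟩)
          · exact ncA'
          · exact ncu' m hm1 (by omega) (by omega)
        rcases hj with rfl | rfl
        · exact WalkIn.cons (AvLb 1 (by omega) (by omega) (by omega) _ (Or.inl rfl)).symm
            (ncleafB true 1 (by omega) (by omega) (by simp; omega) (by simp))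
            (WalkIn.cons (Auv 1 (by omega) (by omega) (by omega)).symm
              (ncv' 1 (by omega) (by omega) (by omega)) hspine)
        · exact WalkIn.cons (AvLb 1 (by omega) (by omega) (by omega) _ (Or.inr rfl)).symm
            (ncleafB true 2 (by omega) (by omega) (by simp; omega) (by simp))
            (WalkIn.cons (Auv 1 (by omega) (by omega) (by omega)).symm
              (ncv' 1 (by omega) (by omega) (by omega)) hspine)
      · by_cases hsm : j ≤ n - 2
        · refine (core true j (by omega) hsm (fun _ => by omega)).mono ?_
          intro z hz
          rcases Set.mem_insert_iff.1 hz with rfl | hz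
          · exact ncleafB true j hj1 hjn (by simp; omega) (by simp)
          · exact hMW1 hz
        · have h' : j = n - 1 := by omega
          rw [h']
          by_cases hin : i = n - 2
          · have hie : i % 2 = 0 := by omega
            have hA := ABb hie
            rw [show i + 1 = n - 1 from by omega] at hA
            exact (WalkIn.single hA ncB'
              (ncleafB true (n-1) (by omega) (by omega) (by simp; omega) (by simp))).symm
          · have hA := AvRb (n-2) (by omega) (by omega) (by omega) _ (Or.inr rfl)
            rw [show n - 2 + 1 = n - 1 from by omega] at hA
            refine WalkIn.cons hA.symm
              (ncleafB true (n-1) (by omega) (by omega) (by simp; omega) (by simp))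
              (WalkIn.cons (Auv (n-2) (by omega) (by omega) (by omega)).symm
                (ncv' (n-2) (by omega) (by omega) (by omega)) ?_)
            refine (spineR (n-2) (by omega) (by omega)).mono ?_
            rintro z (rfl | ⟨m, hm1, hm2, rfl⟩)
            · exact ncB'
            · exact ncu' m (by omega) (by omega) (by omega)
  have dispB : displays T (OmB n) := by
    intro s t hst
    have emp : ∀ r, r ≠ 0 → r ≠ 1 → subtree T {x | OmB n x = r} = ∅ := by
      intro r h0 h1
      apply subtree_empty
      intro x _ hxS
      simp only [Set.mem_setOf_eq] at hxS
      rcases valB x with h | h <;> omega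
    have sub1 : subtree T {x | OmB n x = 1} ⊆ W1 :=
      subtree_subset _ _ _ (fun x hx y hy => (to1B x hx).trans (to1B y hy).symm)
    have sub0 : subtree T {x | OmB n x = 0} ⊆ W1ᶜ :=
      subtree_subset _ _ _ (fun x hx y hy => (to0B x hx).trans (to0B y hy).symm)
    by_cases hs0 : s = 0
    · subst hs0
      by_cases ht1 : t = 1
      · subst ht1; exact disjoint_compl_left.mono sub0 sub1
      · rw [emp t (Ne.symm hst) ht1]; exact Set.disjoint_empty _
    · by_cases hs1 : s = 1
      · subst hs1
        by_cases ht0 : t = 0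
        · subst ht0; exact (disjoint_compl_left.mono sub0 sub1).symm
        · rw [emp t ht0 (Ne.symm hst)]; exact Set.disjoint_empty _
      · rw [emp s hs0 hs1]; exact Set.empty_disjoint _
  exact ⟨dispA, dispB⟩




end PP
end

section
/- For even n ≥ 6 and any 2 ≤ i, j ≤ n-2 with i ≠ j, the lobster tree A_iB displays the character χ_j. -/
namespace SimpleGraph

variable {V α : Type*} (G : SimpleGraph V) (f : V → α)

def sameColor : SimpleGraph V where
  Adj x y := G.Adj x y ∧ f x = f y
  symm := ⟨fun _ _ h => ⟨h.1.symm, h.2.symm⟩⟩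
  loopless := ⟨fun x h => G.loopless.irrefl x h.1⟩

variable {G f}

lemma sameColor_le : G.sameColor f ≤ G := fun _ _ h => h.1

lemma Walk.color_eq_of_mem_support {x y : V} (w : (G.sameColor f).Walk x y) {z : V}
    (hz : z ∈ w.support) : f z = f x := by
  induction w with
  | nil => rw [List.mem_singleton.mp hz]
  | cons hadj w ih =>
    rcases List.mem_cons.mp hz with rfl | hz
    · rfl
    · exact (ih hz).trans hadj.2.symm

lemma reachable_of_adj_succ (g : ℕ → V) {lo hi : ℕ} (hle : lo ≤ hi)
    (hadj : ∀ m, lo ≤ m → m < hi → G.Adj (g m) (g (m + 1))) : G.Reachable (g lo) (g hi) := by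
  induction hi, hle using Nat.le_induction with
  | base => rfl
  | succ hi hle ih =>
    exact (ih fun m h1 h2 => hadj m h1 (by omega)).trans (hadj hi hle (by omega)).reachable

end SimpleGraph

namespace PP

open SimpleGraph

theorem subtree_subset_of_reachable {L : Type} {X : Set L} (T : PhyloTree X) (f : T.V → ℕ)
    {S : Set L} {s : ℕ} (hf : ∀ p ∈ S ∩ X, f (T.leaf p) = s)
    (hr : ∀ p ∈ S ∩ X, ∀ q ∈ S ∩ X, (T.G.sameColor f).Reachable (T.leaf p) (T.leaf q)) :
    subtree T S ⊆ {w | f w = s} := by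
  classical
  rintro w ⟨p, hp, q, hq, P, hP, hw⟩
  obtain ⟨W⟩ := hr p hp q hq
  have hpath : P = (W.mapLe sameColor_le).bypass :=
    congrArg Subtype.val ((T.isTree.isAcyclic.subsingleton_path _ _).elim ⟨P, hP⟩
      ⟨_, Walk.bypass_isPath _⟩)
  rw [hpath] at hw
  have hw' := Walk.support_bypass_subset_support _ hw
  rw [Walk.support_mapLe_eq_support] at hw'
  exact (W.color_eq_of_mem_support hw').trans (hf p hp)

theorem displays_of_reachable {L : Type} {X : Set L} (T : PhyloTree X) (χ : L → ℕ)
    (f : T.V → ℕ) (hf : ∀ p ∈ X, f (T.leaf p) = χ p)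
    (hr : ∀ p ∈ X, ∀ q ∈ X, χ p = χ q → (T.G.sameColor f).Reachable (T.leaf p) (T.leaf q)) :
    displays T χ := by
  have hsub (s : ℕ) : subtree T {x | χ x = s} ⊆ {w | f w = s} :=
    subtree_subset_of_reachable T f (fun p hp => (hf p hp.2).trans hp.1)
      fun p hp q hq => hr p hp.2 q hq.2 (hp.1.trans hq.1.symm)
  intro s t hst
  exact Set.disjoint_of_subset (hsub s) (hsub t)
    (Set.disjoint_left.mpr fun w h1 h2 => hst (h1.symm.trans h2))

inductive LobsterNode
  | leaf (p : Lbl)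
  | u (k : ℕ)
  | v (k : ℕ)
  | uA
  | uB

namespace LobsterNode

instance : Nonempty LobsterNode := ⟨uA⟩

def Valid (n i : ℕ) : LobsterNode → Prop
  | leaf p => p ∈ Xset n
  | u k | v k => 1 ≤ k ∧ k ≤ n - 1 ∧ k ≠ i
  | uA | uB => True

def vert {X : Set Lbl} (T : PhyloTree X) (u v : ℕ → T.V) (uA uB : T.V) : LobsterNode → T.V
  | leaf p => T.leaf p
  | .u k => u k
  | .v k => v k
  | .uA => uA
  | .uB => uB

/-- The node at position `m` of the central path, on which `a₁` is at position `0`, `u_A` at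
`i`, `u_B` at `i + 1` and `bₙ` at `n + 1`. -/
def spine (i m : ℕ) : LobsterNode :=
  if m < i then u m else if m = i then uA else if m = i + 1 then uB else u (m - 1)

lemma spine_of_lt {i m : ℕ} (h : m < i) : spine i m = u m := if_pos h

lemma spine_self (i : ℕ) : spine i i = uA := by simp [spine]

lemma spine_succ_self (i : ℕ) : spine i (i + 1) = uB := by simp [spine]

lemma spine_of_gt {i m : ℕ} (h : i + 1 < m) : spine i m = u (m - 1) := by
  simp only [spine]; split_ifs <;> first | rfl | omega

lemma spine_of_ne {i k : ℕ} (hk : k ≠ i) : spine i (if k < i then k else k + 1) = u k := by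
  unfold spine; split_ifs <;> first | rfl | omega

lemma valid_spine {n i m : ℕ} (hi : i ≤ n) (hm : 1 ≤ m) (hmn : m ≤ n) :
    (spine i m).Valid n i := by
  unfold spine; split_ifs <;> simp only [Valid] <;> omega

/-- The letter (`true` for `b`) of the two leaves `x_k, x_{k+1}` on the twig `v_k`. -/
def twigLetter (i k : ℕ) : Bool := decide ((k < i ∧ k % 2 = 1) ∨ (i < k ∧ k % 2 = 0))

def uALeaf (i : ℕ) : Lbl := (decide (i % 2 = 1), i)

def uBLeaf (i : ℕ) : Lbl := (decide (i % 2 = 0), i + 1)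

/-- The leaves hanging directly from the central path; each sits at the position of its index. -/
def IsSpineLeaf (n i : ℕ) (p : Lbl) : Prop :=
  p = a 1 ∨ p = b n ∨ p = uALeaf i ∨ p = uBLeaf i

lemma isSpineLeaf_or_twig {n i : ℕ} (hn : Even n) (hi : 2 ≤ i) (hi' : i ≤ n - 2) {p : Lbl}
    (hp : p ∈ Xset n) :
    IsSpineLeaf n i p ∨
      ∃ k, 1 ≤ k ∧ k ≤ n - 1 ∧ k ≠ i ∧ (p.2 = k ∨ p.2 = k + 1) ∧ p.1 = twigLetter i k := by
  obtain ⟨c, m⟩ := p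
  obtain ⟨hm, hmn⟩ := hp
  by_cases hprev : 1 ≤ m - 1 ∧ m - 1 ≠ i ∧ c = twigLetter i (m - 1)
  · exact Or.inr ⟨m - 1, hprev.1, by omega, hprev.2.1, Or.inr (by omega), hprev.2.2⟩
  by_cases hcur : m ≤ n - 1 ∧ m ≠ i ∧ c = twigLetter i m
  · exact Or.inr ⟨m, hm, hcur.1, hcur.2.1, Or.inl rfl, hcur.2.2⟩
  left
  have hn2 := Nat.even_iff.mp hn
  cases c <;> simp only [IsSpineLeaf, a, b, uALeaf, uBLeaf, twigLetter, Prod.mk.injEq,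
    false_eq_decide_iff, true_eq_decide_iff, true_and, false_and, Bool.true_eq_false,
    Bool.false_eq_true] at hprev hcur ⊢ <;> omega

/-- `v_j` carries the pair of states `a_j a_{j+1}` (3) or `b_j b_{j+1}` (4) of its letter; the
other pair is joined along the central path and its state is `hubColor`. -/
def cherryColor (i j : ℕ) : ℕ := if twigLetter i j then 4 else 3

def hubColor (i j : ℕ) : ℕ := if twigLetter i j then 3 else 4

def uColor (i j k : ℕ) : ℕ :=
  if k + 2 ≤ j then 0 else if k ≤ j + 1 then hubColor i j else 7

def color (i j : ℕ) : LobsterNode → ℕ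
  | leaf p => chi j p
  | u k => uColor i j k
  | v k => if k = j then cherryColor i j else uColor i j k
  | uA => chi j (uALeaf i)
  | uB => chi j (uBLeaf i)

lemma color_spine_eq_zero_iff {i j m : ℕ} (hj : 2 ≤ j) :
    color i j (spine i m) = 0 ↔ m + 2 ≤ j + if i + 3 ≤ j then 1 else 0 := by
  unfold spine
  split_ifs <;> simp only [color, uColor, hubColor, chi, twigLetter, uALeaf, uBLeaf,
    Bool.cond_decide, decide_eq_true_eq] <;> split_ifs <;> constructor <;> intro <;>
    first | omega | contradiction

lemma color_spine_eq_seven_iff {i j m : ℕ} (hj : 2 ≤ j) :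
    color i j (spine i m) = 7 ↔ j + 3 ≤ m + if j + 3 ≤ i then 1 else 0 := by
  unfold spine
  split_ifs <;> simp only [color, uColor, hubColor, chi, twigLetter, uALeaf, uBLeaf,
    Bool.cond_decide, decide_eq_true_eq] <;> split_ifs <;> constructor <;> intro <;>
    first | omega | contradiction

lemma color_spine_eq_hubColor_iff {i j m : ℕ} (hij : i ≠ j) :
    color i j (spine i m) = hubColor i j ↔
      if i < j then j ≤ m ∧ m ≤ j + 2 else j ≤ m + 1 ∧ m ≤ j + 1 := by
  unfold spine
  split_ifs <;> simp only [color, uColor, hubColor, chi, twigLetter, uALeaf, uBLeaf,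
    Bool.cond_decide, decide_eq_true_eq] <;> split_ifs <;> constructor <;> intro <;>
    first | omega | contradiction

lemma color_spine_ne_cherryColor {i j m : ℕ} (hij : i ≠ j) :
    color i j (spine i m) ≠ cherryColor i j := by
  unfold spine
  split_ifs <;> simp only [color, uColor, hubColor, cherryColor, chi, twigLetter, uALeaf,
    uBLeaf, Bool.cond_decide, decide_eq_true_eq] <;> split_ifs <;> omega

lemma color_spine_of_le_of_le {i j s m l m' : ℕ} (hj : 2 ≤ j) (hij : i ≠ j)
    (hs : s = 0 ∨ s = hubColor i j ∨ s = 7) (hm : color i j (spine i m) = s)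
    (hm' : color i j (spine i m') = s) (hl : m ≤ l) (hl' : l ≤ m') :
    color i j (spine i l) = s := by
  rcases hs with rfl | rfl | rfl
  · rw [color_spine_eq_zero_iff hj] at *; split_ifs at * <;> omega
  · rw [color_spine_eq_hubColor_iff hij] at *; split_ifs at * <;> omega
  · rw [color_spine_eq_seven_iff hj] at *; split_ifs at * <;> omega

lemma color_v_eq_chi {i j k m : ℕ} (hij : i ≠ j) (hki : k ≠ i) (hm : m = k ∨ m = k + 1)
    (hj₁ : m + 1 ≠ j) (hj₂ : m ≠ j + 2) : color i j (v k) = chi j (twigLetter i k, m) := by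
  simp only [color, uColor, hubColor, cherryColor, chi, twigLetter, Bool.cond_decide,
    decide_eq_true_eq]
  split_ifs <;> omega

lemma color_spine_of_isSpineLeaf {n i j : ℕ} (hi : 2 ≤ i) (hi' : i ≤ n - 2) (hj : 2 ≤ j)
    (hj' : j ≤ n - 2) {p : Lbl} (hp : IsSpineLeaf n i p) (hj₁ : p.2 + 1 ≠ j)
    (hj₂ : p.2 ≠ j + 2) : color i j (spine i p.2) = chi j p := by
  rcases hp with rfl | rfl | rfl | rfl
  · rw [show (a 1).2 = 1 from rfl, spine_of_lt (by omega)]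
    simp only [color, uColor, chi, a, cond_false, Nat.reduceAdd] at hj₁ hj₂ ⊢
    grind
  · rw [show (b n).2 = n from rfl, spine_of_gt (by omega)]
    simp only [color, uColor, chi, b, cond_true] at hj₁ hj₂ ⊢
    grind
  · rw [show (uALeaf i).2 = i from rfl, spine_self]; rfl
  · rw [show (uBLeaf i).2 = i + 1 from rfl, spine_succ_self]; rfl

end LobsterNode

lemma eq_of_chi_eq_of_singleton {j : ℕ} {p q : Lbl} (hpq : chi j p = chi j q)
    (hp : p.2 + 1 = j ∨ p.2 = j + 2) : p = q := by
  obtain ⟨c, m⟩ := p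
  obtain ⟨d, l⟩ := q
  cases c <;> cases d <;> simp only [chi, cond_false, cond_true, Prod.mk.injEq, true_and,
    false_and, Bool.false_eq_true, Bool.true_eq_false] at hpq hp ⊢ <;> split_ifs at hpq <;> omega

lemma chi_of_not_singleton (i j : ℕ) {p : Lbl} (hj₁ : p.2 + 1 ≠ j) (hj₂ : p.2 ≠ j + 2) :
    chi j p = 0 ∨ chi j p = LobsterNode.cherryColor i j ∨ chi j p = LobsterNode.hubColor i j ∨
      chi j p = 7 := by
  obtain ⟨c, m⟩ := p
  cases c <;> simp only [chi, LobsterNode.cherryColor, LobsterNode.hubColor, cond_false,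
    cond_true] at hj₁ hj₂ ⊢ <;> split_ifs <;> omega

open LobsterNode

/-- `color` transported to the vertices of `T` along `vert`, which is injective on valid nodes. -/
noncomputable def lobsterColoring (n i j : ℕ) (T : PhyloTree (Xset n)) (u v : ℕ → T.V)
    (uA uB : T.V) (w : T.V) : ℕ :=
  color i j (Function.invFunOn (vert T u v uA uB) {x | x.Valid n i} w)

namespace IsLobsterMid

variable {n i j : ℕ} {T : PhyloTree (Xset n)} {u v : ℕ → T.V} {uA uB : T.V}

lemma injOn_vert (h : IsLobsterMid n i T u v uA uB) :
    Set.InjOn (vert T u v uA uB) {x | x.Valid n i} := by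
  obtain ⟨hnodes, hAB, hleaves, -, -⟩ := h
  rintro (p | k | k | _ | _) hx (q | l | l | _ | _) hy hxy <;>
    simp only [Set.mem_ofPred_eq, Valid, vert] at hx hy hxy
  all_goals first
    | rfl
    | exact congrArg _ (T.leaf_injOn hx hy hxy)
    | grind

lemma adj_of_spec (h : IsLobsterMid n i T u v uA uB) {w w' : T.V}
    (hs : AdjSpecMid n i T u v uA uB w w') : T.G.Adj w w' :=
  (h.2.2.2.2 w w').2 (Or.inl hs)

lemma adj_spine (h : IsLobsterMid n i T u v uA uB) {m : ℕ} (hm : 1 ≤ m) (hmn : m < n) :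
    T.G.Adj (vert T u v uA uB (spine i m)) (vert T u v uA uB (spine i (m + 1))) := by
  rcases (by omega : m + 1 < i ∨ m + 1 = i ∨ m = i ∨ m = i + 1 ∨ i + 1 < m) with
    hlt | rfl | rfl | rfl | hgt
  · rw [spine_of_lt (by omega), spine_of_lt hlt]
    exact h.adj_of_spec (Or.inr <| Or.inl ⟨m, hm, by omega, rfl, rfl⟩)
  · rw [spine_of_lt (by omega), spine_self]
    exact h.adj_of_spec (Or.inr <| Or.inr <| Or.inl ⟨by simp [vert], rfl⟩)
  · rw [spine_self, spine_succ_self]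
    exact h.adj_of_spec (Or.inr <| Or.inr <| Or.inr <| Or.inl ⟨rfl, rfl⟩)
  · rw [spine_succ_self, spine_of_gt (by omega)]
    exact h.adj_of_spec (Or.inr <| Or.inr <| Or.inr <| Or.inr <| Or.inl ⟨rfl, rfl⟩)
  · rw [spine_of_gt hgt, spine_of_gt (by omega)]
    refine h.adj_of_spec (Or.inr <| Or.inr <| Or.inr <| Or.inr <| Or.inr <| Or.inl
      ⟨m - 1, by omega, by omega, rfl, ?_⟩)
    simp only [vert, Nat.add_one_sub_one, Nat.sub_add_cancel (by omega : 1 ≤ m)]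

lemma adj_u_v (h : IsLobsterMid n i T u v uA uB) {k : ℕ} (hk : 1 ≤ k) (hkn : k ≤ n - 1)
    (hki : k ≠ i) : T.G.Adj (u k) (v k) :=
  h.adj_of_spec (Or.inr <| Or.inr <| Or.inr <| Or.inr <| Or.inr <| Or.inr <| Or.inr <| Or.inl
    ⟨k, hk, hkn, hki, rfl, rfl⟩)

lemma adj_v_leaf (h : IsLobsterMid n i T u v uA uB) {k m : ℕ} (hk : 1 ≤ k) (hkn : k ≤ n - 1)
    (hki : k ≠ i) (hm : m = k ∨ m = k + 1) :
    T.G.Adj (v k) (T.leaf (twigLetter i k, m)) := by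
  have hleaf (c : Bool) : T.leaf (c, m) = T.leaf (c, k) ∨ T.leaf (c, m) = T.leaf (c, k + 1) := by
    rcases hm with rfl | rfl <;> simp
  rcases Nat.lt_or_gt_of_ne hki with hlt | hgt <;>
    rcases Nat.mod_two_eq_zero_or_one k with hev | hod
  · rw [show twigLetter i k = false by simp [twigLetter]; omega]
    exact h.adj_of_spec (Or.inr <| Or.inr <| Or.inr <| Or.inr <| Or.inr <| Or.inr <| Or.inr <|
      Or.inr <| Or.inr <| Or.inr <| Or.inr <| Or.inr <| Or.inr <| Or.inl
      ⟨k, hk, hlt, hev, rfl, hleaf false⟩)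
  · rw [show twigLetter i k = true by simp [twigLetter]; omega]
    exact h.adj_of_spec (Or.inr <| Or.inr <| Or.inr <| Or.inr <| Or.inr <| Or.inr <| Or.inr <|
      Or.inr <| Or.inr <| Or.inr <| Or.inr <| Or.inr <| Or.inl
      ⟨k, hk, hlt, hod, rfl, hleaf true⟩)
  · rw [show twigLetter i k = true by simp [twigLetter]; omega]
    exact h.adj_of_spec (Or.inr <| Or.inr <| Or.inr <| Or.inr <| Or.inr <| Or.inr <| Or.inr <|
      Or.inr <| Or.inr <| Or.inr <| Or.inr <| Or.inr <| Or.inr <| Or.inr <| Or.inr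
      ⟨k, hgt, hkn, hev, rfl, hleaf true⟩)
  · rw [show twigLetter i k = false by simp [twigLetter]; omega]
    exact h.adj_of_spec (Or.inr <| Or.inr <| Or.inr <| Or.inr <| Or.inr <| Or.inr <| Or.inr <|
      Or.inr <| Or.inr <| Or.inr <| Or.inr <| Or.inr <| Or.inr <| Or.inr <| Or.inl
      ⟨k, hgt, hkn, hod, rfl, hleaf false⟩)

lemma adj_spine_leaf (h : IsLobsterMid n i T u v uA uB) (hi : 2 ≤ i) (hi' : i ≤ n - 2)
    {p : Lbl} (hp : IsSpineLeaf n i p) :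
    T.G.Adj (vert T u v uA uB (spine i p.2)) (T.leaf p) := by
  rcases hp with rfl | rfl | rfl | rfl
  · rw [show (a 1).2 = 1 from rfl, spine_of_lt (by omega)]
    exact (h.adj_of_spec (Or.inl ⟨rfl, rfl⟩)).symm
  · rw [show (b n).2 = n from rfl, spine_of_gt (by omega)]
    exact h.adj_of_spec (Or.inr <| Or.inr <| Or.inr <| Or.inr <| Or.inr <| Or.inr <| Or.inl
      ⟨rfl, rfl⟩)
  · rw [show (uALeaf i).2 = i from rfl, spine_self]
    rcases Nat.mod_two_eq_zero_or_one i with hev | hod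
    · rw [show uALeaf i = a i by simp [uALeaf, a, hev]]
      exact h.adj_of_spec (Or.inr <| Or.inr <| Or.inr <| Or.inr <| Or.inr <| Or.inr <| Or.inr <|
        Or.inr <| Or.inl ⟨hev, rfl, rfl⟩)
    · rw [show uALeaf i = b i by simp [uALeaf, b, hod]]
      exact h.adj_of_spec (Or.inr <| Or.inr <| Or.inr <| Or.inr <| Or.inr <| Or.inr <| Or.inr <|
        Or.inr <| Or.inr <| Or.inr <| Or.inl ⟨hod, rfl, rfl⟩)
  · rw [show (uBLeaf i).2 = i + 1 from rfl, spine_succ_self]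
    rcases Nat.mod_two_eq_zero_or_one i with hev | hod
    · rw [show uBLeaf i = b (i + 1) by simp [uBLeaf, b, hev]]
      exact h.adj_of_spec (Or.inr <| Or.inr <| Or.inr <| Or.inr <| Or.inr <| Or.inr <| Or.inr <|
        Or.inr <| Or.inr <| Or.inl ⟨hev, rfl, rfl⟩)
    · rw [show uBLeaf i = a (i + 1) by simp [uBLeaf, a, hod]]
      exact h.adj_of_spec (Or.inr <| Or.inr <| Or.inr <| Or.inr <| Or.inr <| Or.inr <| Or.inr <|
        Or.inr <| Or.inr <| Or.inr <| Or.inr <| Or.inl ⟨hod, rfl, rfl⟩)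

lemma lobsterColoring_vert (h : IsLobsterMid n i T u v uA uB) {x : LobsterNode}
    (hx : x.Valid n i) :
    lobsterColoring n i j T u v uA uB (vert T u v uA uB x) = color i j x := by
  rw [lobsterColoring, h.injOn_vert.leftInvOn_invFunOn hx]

lemma sameColor_adj (h : IsLobsterMid n i T u v uA uB) {x y : LobsterNode} (hx : x.Valid n i)
    (hy : y.Valid n i) (hxy : T.G.Adj (vert T u v uA uB x) (vert T u v uA uB y))
    (hc : color i j x = color i j y) :
    (T.G.sameColor (lobsterColoring n i j T u v uA uB)).Adj (vert T u v uA uB x)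
      (vert T u v uA uB y) :=
  ⟨hxy, by rw [h.lobsterColoring_vert hx, h.lobsterColoring_vert hy, hc]⟩

lemma reachable_spine (h : IsLobsterMid n i T u v uA uB) (hi : i ≤ n) (hj : 2 ≤ j)
    (hij : i ≠ j) {s m m' : ℕ} (hs : s = 0 ∨ s = hubColor i j ∨ s = 7) (hm : 1 ≤ m) (hmn : m ≤ n)
    (hm' : 1 ≤ m') (hmn' : m' ≤ n) (hc : color i j (spine i m) = s)
    (hc' : color i j (spine i m') = s) :
    (T.G.sameColor (lobsterColoring n i j T u v uA uB)).Reachable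
      (vert T u v uA uB (spine i m)) (vert T u v uA uB (spine i m')) := by
  wlog hle : m ≤ m' generalizing m m'
  · exact (this hm' hmn' hm hmn hc' hc (by omega)).symm
  refine reachable_of_adj_succ (fun l => vert T u v uA uB (spine i l)) hle fun l hl hl' => ?_
  refine h.sameColor_adj (valid_spine hi (by omega) (by omega))
    (valid_spine hi (by omega) (by omega)) (h.adj_spine (by omega) (by omega)) ?_
  rw [color_spine_of_le_of_le hj hij hs hc hc' hl hl'.le,
    color_spine_of_le_of_le hj hij hs hc hc' (by omega) hl']

lemma leaf_adj_v_or_reachable_spine (h : IsLobsterMid n i T u v uA uB) (hn : Even n)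
    (hi : 2 ≤ i) (hi' : i ≤ n - 2) (hj : 2 ≤ j) (hj' : j ≤ n - 2) (hij : i ≠ j) {p : Lbl}
    (hp : p ∈ Xset n) (hj₁ : p.2 + 1 ≠ j) (hj₂ : p.2 ≠ j + 2) :
    (chi j p = cherryColor i j ∧
        (T.G.sameColor (lobsterColoring n i j T u v uA uB)).Adj (T.leaf p) (v j)) ∨
      ∃ m, 1 ≤ m ∧ m ≤ n ∧ color i j (spine i m) = chi j p ∧
        (T.G.sameColor (lobsterColoring n i j T u v uA uB)).Reachable (T.leaf p)
          (vert T u v uA uB (spine i m)) := by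
  rcases isSpineLeaf_or_twig hn hi hi' hp with hsp | ⟨k, hk, hkn, hki, hpk, hlet⟩
  · have hc := color_spine_of_isSpineLeaf hi hi' hj hj' hsp hj₁ hj₂
    refine Or.inr ⟨p.2, hp.1, hp.2, hc, Adj.reachable ?_⟩
    exact (h.sameColor_adj (y := .leaf p) (valid_spine (by omega) hp.1 hp.2) hp
      (h.adj_spine_leaf hi hi' hsp) hc).symm
  obtain ⟨c, m⟩ := p
  obtain rfl : c = twigLetter i k := hlet
  have hcv : color i j (.v k) = chi j (twigLetter i k, m) := color_v_eq_chi hij hki hpk hj₁ hj₂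
  have hleaf : (T.G.sameColor (lobsterColoring n i j T u v uA uB)).Adj
      (T.leaf (twigLetter i k, m)) (v k) :=
    (h.sameColor_adj (x := .v k) (y := .leaf _) ⟨hk, hkn, hki⟩ hp
      (h.adj_v_leaf hk hkn hki hpk) hcv).symm
  by_cases hkj : k = j
  · subst hkj
    exact Or.inl ⟨by rw [← hcv]; simp [color], hleaf⟩
  · refine Or.inr ⟨if k < i then k else k + 1, by split_ifs <;> omega, by split_ifs <;> omega,
      ?_⟩
    rw [spine_of_ne hki]
    refine ⟨by rw [← hcv]; simp [color, hkj], hleaf.reachable.trans (Adj.reachable ?_)⟩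
    exact (h.sameColor_adj (x := .u k) (y := .v k) ⟨hk, hkn, hki⟩ ⟨hk, hkn, hki⟩
      (h.adj_u_v hk hkn hki) (by simp [color, hkj])).symm

lemma reachable_of_chi_eq (h : IsLobsterMid n i T u v uA uB) (hn : Even n) (hi : 2 ≤ i)
    (hi' : i ≤ n - 2) (hj : 2 ≤ j) (hj' : j ≤ n - 2) (hij : i ≠ j) {p q : Lbl}
    (hp : p ∈ Xset n) (hq : q ∈ Xset n) (hpq : chi j p = chi j q) :
    (T.G.sameColor (lobsterColoring n i j T u v uA uB)).Reachable (T.leaf p) (T.leaf q) := by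
  by_cases hsp : p.2 + 1 = j ∨ p.2 = j + 2
  · rw [eq_of_chi_eq_of_singleton hpq hsp]
  have hsq : ¬(q.2 + 1 = j ∨ q.2 = j + 2) := fun hsq =>
    hsp (eq_of_chi_eq_of_singleton hpq.symm hsq ▸ hsq)
  rw [not_or] at hsp hsq
  rcases h.leaf_adj_v_or_reachable_spine hn hi hi' hj hj' hij hp hsp.1 hsp.2 with
    ⟨hpc, hpa⟩ | ⟨m, hm, hmn, hcm, hpm⟩ <;>
  rcases h.leaf_adj_v_or_reachable_spine hn hi hi' hj hj' hij hq hsq.1 hsq.2 with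
    ⟨hqc, hqa⟩ | ⟨m', hm', hmn', hcm', hqm⟩
  · exact hpa.reachable.trans hqa.reachable.symm
  · exact absurd (hcm'.trans (hpq.symm.trans hpc)) (color_spine_ne_cherryColor hij)
  · exact absurd (hcm.trans (hpq.trans hqc)) (color_spine_ne_cherryColor hij)
  · have hs : chi j p = 0 ∨ chi j p = hubColor i j ∨ chi j p = 7 := by
      have hne : chi j p ≠ cherryColor i j := hcm ▸ color_spine_ne_cherryColor hij
      rcases chi_of_not_singleton i j hsp.1 hsp.2 with hs | hs | hs <;> tauto
    exact hpm.trans ((h.reachable_spine (by omega) hj hij hs hm hmn hm' hmn' hcm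
      (hcm'.trans hpq.symm)).trans hqm.symm)

end IsLobsterMid

theorem lobsterMid_displays_chi_general (n i j : ℕ) (hn : Even n)
    (hi : 2 ≤ i) (hi' : i ≤ n - 2) (hj : 2 ≤ j) (hj' : j ≤ n - 2) (hij : i ≠ j)
    (T : PhyloTree (Xset n)) (u v : ℕ → T.V) (uA uB : T.V)
    (h : IsLobsterMid n i T u v uA uB) :
    displays T (chi j) :=
  displays_of_reachable T (chi j) (lobsterColoring n i j T u v uA uB)
    (fun p hp => h.lobsterColoring_vert (x := .leaf p) hp)
    (fun _ hp _ hq hpq => h.reachable_of_chi_eq hn hi hi' hj hj' hij hp hq hpq)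

theorem lobsterMid_displays_chi (n i j : ℕ) (hn : Even n) (hn6 : 6 ≤ n)
    (hi : 2 ≤ i) (hi' : i ≤ n - 2) (hj : 2 ≤ j) (hj' : j ≤ n - 2) (hij : i ≠ j)
    (T : PhyloTree (Xset n)) (u v : ℕ → T.V) (uA uB : T.V)
    (h : IsLobsterMid n i T u v uA uB) :
    displays T (chi j) :=
  lobsterMid_displays_chi_general n i j hn hi hi' hj hj' hij T u v uA uB h

end PP
end

section
/- For even n ≥ 6, any 2 ≤ i ≤ n-2 and any 3 ≤ j ≤ n-1, the lobster tree A_iB displays the character φ_j. -/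
namespace PP

section LobsterAux

open SimpleGraph

private lemma subtree_subset_of_walks {L : Type} {X : Set L} (T : PhyloTree X) (S : Set L)
    (C : Set T.V) (hub : T.V)
    (hW : ∀ x ∈ S ∩ X, ∃ W : T.G.Walk (T.leaf x) hub, ∀ w ∈ W.support, w ∈ C) :
    subtree T S ⊆ C := by
  classical
  rintro w ⟨x, hx, y, hy, p, hp, hw⟩
  obtain ⟨Wx, hWx⟩ := hW x hx
  obtain ⟨Wy, hWy⟩ := hW y hy
  have huniq := T.isTree.existsUnique_path (T.leaf x) (T.leaf y)
  have hpe : p = ((Wx.append Wy.reverse).toPath : T.G.Walk (T.leaf x) (T.leaf y)) :=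
    huniq.unique hp (Wx.append Wy.reverse).toPath.2
  rw [hpe] at hw
  have hw2 : w ∈ (Wx.append Wy.reverse).support :=
    Walk.support_toPath_subset _ hw
  rw [Walk.mem_support_append_iff] at hw2
  rcases hw2 with hw2 | hw2
  · exact hWx w hw2
  · rw [Walk.support_reverse, List.mem_reverse] at hw2
    exact hWy w hw2

/-- position `t` on the central spine, `t ∈ [1, n]`. -/
def spineV (i : ℕ) {X : Set Lbl} {T : PhyloTree X} (u : ℕ → T.V) (uA uB : T.V) (t : ℕ) : T.V :=
  if t < i then u t else if t = i then uA else if t = i + 1 then uB else u (t - 1)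

/-- the spine position at which a leaf is attached. -/
def spPos (n i : ℕ) : Lbl → ℕ
  | (true, m) => if m % 2 = 1 then m else if m ≤ i then m - 1 else if m = n then n else m + 1
  | (false, m) => if m % 2 = 0 then m else if m = 1 then 1 else if m ≤ i then m - 1 else m + 1

/-- the unique label with state `s ∈ {1,2,3,4}` under `phi j`. -/
def xelt (j s : ℕ) : Lbl :=
  if j % 2 = 0 then
    (if s = 1 then a (j-2) else if s = 2 then a (j-1) else if s = 3 then b j else b (j+1))
  else
    (if s = 1 then b (j-2) else if s = 2 then b (j-1) else if s = 3 then a j else a (j+1))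

variable {n i : ℕ} {T : PhyloTree (Xset n)} {u v : ℕ → T.V} {uA uB : T.V}

lemma spineV_lt {t : ℕ} (h : t < i) : spineV i u uA uB t = u t := if_pos h

lemma spineV_i : spineV i u uA uB i = uA := by
  unfold spineV; rw [if_neg (lt_irrefl i), if_pos rfl]

lemma spineV_i1 : spineV i u uA uB (i + 1) = uB := by
  unfold spineV; rw [if_neg (by omega), if_neg (by omega), if_pos rfl]

lemma spineV_gt {t : ℕ} (h : i + 2 ≤ t) : spineV i u uA uB t = u (t - 1) := by
  unfold spineV; rw [if_neg (by omega), if_neg (by omega), if_neg (by omega)]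

lemma adjD (hL : IsLobsterMid n i T u v uA uB) {w w' : T.V}
    (hs : AdjSpecMid n i T u v uA uB w w') : T.G.Adj w w' :=
  (hL.2.2.2.2 w w').mpr (Or.inl hs)

lemma adjD' (hL : IsLobsterMid n i T u v uA uB) {w w' : T.V}
    (hs : AdjSpecMid n i T u v uA uB w' w) : T.G.Adj w w' :=
  (hL.2.2.2.2 w w').mpr (Or.inr hs)

lemma specD1 : AdjSpecMid n i T u v uA uB (T.leaf (a 1)) (u 1) := Or.inl ⟨rfl, rfl⟩

lemma specD2 (k : ℕ) (h1 : 1 ≤ k) (h2 : k + 1 ≤ i - 1) :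
    AdjSpecMid n i T u v uA uB (u k) (u (k+1)) :=
  Or.inr (Or.inl ⟨k, h1, h2, rfl, rfl⟩)

lemma specD3 : AdjSpecMid n i T u v uA uB (u (i-1)) uA :=
  Or.inr (Or.inr (Or.inl ⟨rfl, rfl⟩))

lemma specD4 : AdjSpecMid n i T u v uA uB uA uB :=
  Or.inr (Or.inr (Or.inr (Or.inl ⟨rfl, rfl⟩)))

lemma specD5 : AdjSpecMid n i T u v uA uB uB (u (i+1)) :=
  Or.inr (Or.inr (Or.inr (Or.inr (Or.inl ⟨rfl, rfl⟩))))

lemma specD6 (k : ℕ) (h1 : i + 1 ≤ k) (h2 : k + 1 ≤ n - 1) :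
    AdjSpecMid n i T u v uA uB (u k) (u (k+1)) :=
  Or.inr (Or.inr (Or.inr (Or.inr (Or.inr (Or.inl ⟨k, h1, h2, rfl, rfl⟩)))))

lemma specD7 : AdjSpecMid n i T u v uA uB (u (n-1)) (T.leaf (b n)) :=
  Or.inr (Or.inr (Or.inr (Or.inr (Or.inr (Or.inr (Or.inl ⟨rfl, rfl⟩))))))

lemma specD8 (k : ℕ) (h1 : 1 ≤ k) (h2 : k ≤ n - 1) (h3 : k ≠ i) :
    AdjSpecMid n i T u v uA uB (u k) (v k) :=
  Or.inr (Or.inr (Or.inr (Or.inr (Or.inr (Or.inr (Or.inr (Or.inl ⟨k, h1, h2, h3, rfl, rfl⟩)))))))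

lemma specD9 (h : i % 2 = 0) : AdjSpecMid n i T u v uA uB uA (T.leaf (a i)) :=
  Or.inr (Or.inr (Or.inr (Or.inr (Or.inr (Or.inr (Or.inr (Or.inr (Or.inl ⟨h, rfl, rfl⟩))))))))

lemma specD10 (h : i % 2 = 0) : AdjSpecMid n i T u v uA uB uB (T.leaf (b (i+1))) :=
  Or.inr (Or.inr (Or.inr (Or.inr (Or.inr (Or.inr (Or.inr (Or.inr (Or.inr (Or.inl ⟨h, rfl, rfl⟩)))))))))

lemma specD11 (h : i % 2 = 1) : AdjSpecMid n i T u v uA uB uA (T.leaf (b i)) :=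
  Or.inr (Or.inr (Or.inr (Or.inr (Or.inr (Or.inr (Or.inr (Or.inr (Or.inr (Or.inr (Or.inl ⟨h, rfl, rfl⟩))))))))))

lemma specD12 (h : i % 2 = 1) : AdjSpecMid n i T u v uA uB uB (T.leaf (a (i+1))) :=
  Or.inr (Or.inr (Or.inr (Or.inr (Or.inr (Or.inr (Or.inr (Or.inr (Or.inr (Or.inr (Or.inr (Or.inl ⟨h, rfl, rfl⟩)))))))))))

lemma specD13 (k : ℕ) (h1 : 1 ≤ k) (h2 : k < i) (h3 : k % 2 = 1) (x : Lbl)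
    (hx : x = b k ∨ x = b (k+1)) : AdjSpecMid n i T u v uA uB (v k) (T.leaf x) := by
  refine Or.inr (Or.inr (Or.inr (Or.inr (Or.inr (Or.inr (Or.inr (Or.inr (Or.inr (Or.inr
    (Or.inr (Or.inr (Or.inl ⟨k, h1, h2, h3, rfl, ?_⟩))))))))))))
  rcases hx with rfl | rfl
  · exact Or.inl rfl
  · exact Or.inr rfl

lemma specD14 (k : ℕ) (h1 : 1 ≤ k) (h2 : k < i) (h3 : k % 2 = 0) (x : Lbl)
    (hx : x = a k ∨ x = a (k+1)) : AdjSpecMid n i T u v uA uB (v k) (T.leaf x) := by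
  refine Or.inr (Or.inr (Or.inr (Or.inr (Or.inr (Or.inr (Or.inr (Or.inr (Or.inr (Or.inr
    (Or.inr (Or.inr (Or.inr (Or.inl ⟨k, h1, h2, h3, rfl, ?_⟩)))))))))))))
  rcases hx with rfl | rfl
  · exact Or.inl rfl
  · exact Or.inr rfl

lemma specD15 (k : ℕ) (h1 : i < k) (h2 : k ≤ n - 1) (h3 : k % 2 = 1) (x : Lbl)
    (hx : x = a k ∨ x = a (k+1)) : AdjSpecMid n i T u v uA uB (v k) (T.leaf x) := by
  refine Or.inr (Or.inr (Or.inr (Or.inr (Or.inr (Or.inr (Or.inr (Or.inr (Or.inr (Or.inr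
    (Or.inr (Or.inr (Or.inr (Or.inr (Or.inl ⟨k, h1, h2, h3, rfl, ?_⟩))))))))))))))
  rcases hx with rfl | rfl
  · exact Or.inl rfl
  · exact Or.inr rfl

lemma specD16 (k : ℕ) (h1 : i < k) (h2 : k ≤ n - 1) (h3 : k % 2 = 0) (x : Lbl)
    (hx : x = b k ∨ x = b (k+1)) : AdjSpecMid n i T u v uA uB (v k) (T.leaf x) := by
  refine Or.inr (Or.inr (Or.inr (Or.inr (Or.inr (Or.inr (Or.inr (Or.inr (Or.inr (Or.inr
    (Or.inr (Or.inr (Or.inr (Or.inr (Or.inr ⟨k, h1, h2, h3, rfl, ?_⟩))))))))))))))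
  rcases hx with rfl | rfl
  · exact Or.inl rfl
  · exact Or.inr rfl

lemma u_props (hL : IsLobsterMid n i T u v uA uB) {k : ℕ}
    (h1 : 1 ≤ k) (h2 : k ≤ n - 1) (h3 : k ≠ i) :
    u k ≠ uA ∧ u k ≠ uB ∧ v k ≠ uA ∧ v k ≠ uB :=
  (hL.1 k k h1 h2 h3 h1 h2 h3).2.2.2

lemma spineV_cases (hi2 : 2 ≤ i) (hi' : i ≤ n - 2) (hn6 : 6 ≤ n) {t : ℕ}
    (ht1 : 1 ≤ t) (htn : t ≤ n) :
    spineV i u uA uB t = uA ∨ spineV i u uA uB t = uB ∨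
      ∃ k, 1 ≤ k ∧ k ≤ n - 1 ∧ k ≠ i ∧ spineV i u uA uB t = u k := by
  rcases (show t < i ∨ t = i ∨ t = i + 1 ∨ i + 2 ≤ t from by omega) with h | rfl | rfl | h
  · exact Or.inr (Or.inr ⟨t, ht1, by omega, by omega, spineV_lt h⟩)
  · exact Or.inl spineV_i
  · exact Or.inr (Or.inl spineV_i1)
  · exact Or.inr (Or.inr ⟨t - 1, by omega, by omega, by omega, spineV_gt h⟩)

lemma leaf_ne_spineV (hL : IsLobsterMid n i T u v uA uB)
    (hi2 : 2 ≤ i) (hi' : i ≤ n - 2) (hn6 : 6 ≤ n) {p : Lbl} (hp : p ∈ Xset n) {t : ℕ}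
    (ht1 : 1 ≤ t) (htn : t ≤ n) : T.leaf p ≠ spineV i u uA uB t := by
  obtain ⟨h1, h2, h3⟩ := hL.2.2.1 p hp
  rcases spineV_cases hi2 hi' hn6 ht1 htn with h | h | ⟨k, hk1, hk2, hk3, h⟩ <;> rw [h]
  exacts [h1, h2, (h3 k hk1 hk2 hk3).1]

lemma spineV_ne_v (hL : IsLobsterMid n i T u v uA uB)
    (hi2 : 2 ≤ i) (hi' : i ≤ n - 2) (hn6 : 6 ≤ n) {t : ℕ} (ht1 : 1 ≤ t) (htn : t ≤ n)
    {k : ℕ} (hk1 : 1 ≤ k) (hk2 : k ≤ n - 1) (hk3 : k ≠ i) :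
    spineV i u uA uB t ≠ v k := by
  rcases spineV_cases hi2 hi' hn6 ht1 htn with h | h | ⟨l, hl1, hl2, hl3, h⟩ <;> rw [h]
  · exact fun he => (u_props hL hk1 hk2 hk3).2.2.1 he.symm
  · exact fun he => (u_props hL hk1 hk2 hk3).2.2.2 he.symm
  · exact (hL.1 l k hl1 hl2 hl3 hk1 hk2 hk3).2.2.1

lemma spineV_inj (hL : IsLobsterMid n i T u v uA uB)
    (hi2 : 2 ≤ i) (hi' : i ≤ n - 2) (hn6 : 6 ≤ n) {t t' : ℕ}
    (ht1 : 1 ≤ t) (htn : t ≤ n) (ht1' : 1 ≤ t') (htn' : t' ≤ n)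
    (he : spineV i u uA uB t = spineV i u uA uB t') : t = t' := by
  rcases (show t < i ∨ t = i ∨ t = i + 1 ∨ i + 2 ≤ t from by omega) with h | h | h | h <;>
    rcases (show t' < i ∨ t' = i ∨ t' = i + 1 ∨ i + 2 ≤ t' from by omega) with h' | h' | h' | h'
  · rw [spineV_lt h, spineV_lt h'] at he
    exact (hL.1 t t' (by omega) (by omega) (by omega) (by omega) (by omega) (by omega)).1 he
  · rw [spineV_lt h, h', spineV_i] at he
    exact absurd he (u_props hL (by omega) (by omega) (by omega)).1
  · rw [spineV_lt h, h', spineV_i1] at he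
    exact absurd he (u_props hL (by omega) (by omega) (by omega)).2.1
  · rw [spineV_lt h, spineV_gt h'] at he
    have := (hL.1 t (t' - 1) (by omega) (by omega) (by omega) (by omega) (by omega) (by omega)).1 he
    omega
  · rw [h, spineV_i, spineV_lt h'] at he
    exact absurd he.symm (u_props hL (by omega) (by omega) (by omega)).1
  · omega
  · rw [h, spineV_i, h', spineV_i1] at he
    exact absurd he hL.2.1
  · rw [h, spineV_i, spineV_gt h'] at he
    exact absurd he.symm (u_props hL (by omega) (by omega) (by omega)).1
  · rw [h, spineV_i1, spineV_lt h'] at he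
    exact absurd he.symm (u_props hL (by omega) (by omega) (by omega)).2.1
  · rw [h, spineV_i1, h', spineV_i] at he
    exact absurd he.symm hL.2.1
  · omega
  · rw [h, spineV_i1, spineV_gt h'] at he
    exact absurd he.symm (u_props hL (by omega) (by omega) (by omega)).2.1
  · rw [spineV_gt h, spineV_lt h'] at he
    have := (hL.1 (t - 1) t' (by omega) (by omega) (by omega) (by omega) (by omega) (by omega)).1 he
    omega
  · rw [spineV_gt h, h', spineV_i] at he
    exact absurd he (u_props hL (by omega) (by omega) (by omega)).1
  · rw [spineV_gt h, h', spineV_i1] at he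
    exact absurd he (u_props hL (by omega) (by omega) (by omega)).2.1
  · rw [spineV_gt h, spineV_gt h'] at he
    have := (hL.1 (t - 1) (t' - 1) (by omega) (by omega) (by omega) (by omega) (by omega) (by omega)).1 he
    omega

lemma adj_spine (hL : IsLobsterMid n i T u v uA uB)
    (hi2 : 2 ≤ i) (hi' : i ≤ n - 2) (hn6 : 6 ≤ n) {t : ℕ} (ht1 : 1 ≤ t) (ht : t + 1 ≤ n) :
    T.G.Adj (spineV i u uA uB t) (spineV i u uA uB (t+1)) := by
  rcases (show t + 1 < i ∨ t + 1 = i ∨ t = i ∨ t = i + 1 ∨ i + 2 ≤ t from by omega) with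
    h | h | rfl | rfl | h
  · rw [spineV_lt (by omega), spineV_lt h]
    exact adjD hL (specD2 t ht1 (by omega))
  · rw [spineV_lt (by omega), h, spineV_i]
    have e : t = i - 1 := by omega
    rw [e]; exact adjD hL specD3
  · rw [spineV_i, spineV_i1]; exact adjD hL specD4
  · rw [spineV_i1, spineV_gt (by omega)]
    have e : i + 1 + 1 - 1 = i + 1 := by omega
    rw [e]; exact adjD hL specD5
  · rw [spineV_gt (by omega), spineV_gt (by omega)]
    have e : t + 1 - 1 = (t - 1) + 1 := by omega
    rw [e]; exact adjD hL (specD6 (t-1) (by omega) (by omega))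

lemma spine_walk (hL : IsLobsterMid n i T u v uA uB)
    (hi2 : 2 ≤ i) (hi' : i ≤ n - 2) (hn6 : 6 ≤ n) :
    ∀ d t, 1 ≤ t → t + d ≤ n →
      ∃ W : T.G.Walk (spineV i u uA uB (t + d)) (spineV i u uA uB t),
        ∀ w ∈ W.support, ∃ s, t ≤ s ∧ s ≤ t + d ∧ w = spineV i u uA uB s := by
  intro d
  induction d with
  | zero =>
    intro t ht _
    exact ⟨Walk.nil, fun w hw => ⟨t, le_refl t, by omega, by simpa using hw⟩⟩
  | succ d ih =>
    intro t ht hn'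
    obtain ⟨W, hW⟩ := ih t ht (by omega)
    refine ⟨Walk.cons (adj_spine hL hi2 hi' hn6 (by omega : 1 ≤ t + d) (by omega)).symm W, ?_⟩
    intro w hw
    rw [Walk.support_cons, List.mem_cons] at hw
    rcases hw with rfl | hw
    · exact ⟨t + d + 1, by omega, by omega, rfl⟩
    · obtain ⟨s, hs1, hs2, hs3⟩ := hW w hw
      exact ⟨s, hs1, by omega, hs3⟩

lemma spine_walk' (hL : IsLobsterMid n i T u v uA uB)
    (hi2 : 2 ≤ i) (hi' : i ≤ n - 2) (hn6 : 6 ≤ n) {t t' : ℕ}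
    (h1 : 1 ≤ t) (h2 : t ≤ t') (h3 : t' ≤ n) :
    ∃ W : T.G.Walk (spineV i u uA uB t') (spineV i u uA uB t),
      ∀ w ∈ W.support, ∃ s, t ≤ s ∧ s ≤ t' ∧ w = spineV i u uA uB s := by
  obtain ⟨d, rfl⟩ : ∃ d, t' = t + d := ⟨t' - t, by omega⟩
  exact spine_walk hL hi2 hi' hn6 d t h1 h3

end LobsterAux
section LobsterAux2

open SimpleGraph

variable {n i j : ℕ} {T : PhyloTree (Xset n)} {u v : ℕ → T.V} {uA uB : T.V}

lemma attach (hL : IsLobsterMid n i T u v uA uB) (hn2 : n % 2 = 0) (hn6 : 6 ≤ n)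
    (hi2 : 2 ≤ i) (hi' : i ≤ n - 2) (p : Lbl) (hp : p ∈ Xset n) :
    ∃ W : T.G.Walk (T.leaf p) (spineV i u uA uB (spPos n i p)),
      ∀ w ∈ W.support, w = T.leaf p ∨ w = spineV i u uA uB (spPos n i p) ∨
        ∃ k, 1 ≤ k ∧ k ≤ n - 1 ∧ k ≠ i ∧ w = v k ∧ (if k < i then k else k + 1) = spPos n i p := by
  obtain ⟨sb, m⟩ := p
  have hm1 : 1 ≤ m := hp.1
  have hmn : m ≤ n := hp.2
  cases sb
  case false =>
    rcases (show m = 1 ∨ (m % 2 = 0 ∧ m < i) ∨ (m % 2 = 0 ∧ m = i) ∨ (m % 2 = 0 ∧ m = i + 1)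
        ∨ (m % 2 = 0 ∧ i + 2 ≤ m) ∨ (m % 2 = 1 ∧ 2 ≤ m ∧ m ≤ i) ∨ (m % 2 = 1 ∧ 2 ≤ m ∧ i < m)
        from by omega) with rfl | ⟨he, hc⟩ | ⟨he, hc⟩ | ⟨he, hc⟩ | ⟨he, hc⟩ | ⟨he, hc, hc'⟩ |
          ⟨he, hc, hc'⟩
    · have hsp : spPos n i (false, 1) = 1 := by simp only [spPos]; split_ifs <;> omega
      rw [hsp, spineV_lt (show 1 < i by omega)]
      refine ⟨Walk.cons (adjD hL specD1) Walk.nil, ?_⟩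
      intro w hw
      simp only [Walk.support_cons, Walk.support_nil, List.mem_cons, List.mem_singleton,
        List.not_mem_nil, or_false] at hw
      rcases hw with rfl | rfl
      · exact Or.inl rfl
      · exact Or.inr (Or.inl rfl)
    · -- a, m even, m < i : via v m, u m
      have hsp : spPos n i (false, m) = m := by simp only [spPos]; split_ifs <;> omega
      rw [hsp, spineV_lt hc]
      refine ⟨Walk.cons (adjD' hL (specD14 m (by omega) hc he (a m) (Or.inl rfl)))
        (Walk.cons (adjD' hL (specD8 m (by omega) (by omega) (by omega))) Walk.nil), ?_⟩
      intro w hw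
      simp only [Walk.support_cons, Walk.support_nil, List.mem_cons, List.mem_singleton,
        List.not_mem_nil, or_false] at hw
      rcases hw with rfl | rfl | rfl
      · exact Or.inl rfl
      · exact Or.inr (Or.inr ⟨m, by omega, by omega, by omega, rfl, by rw [if_pos hc]⟩)
      · exact Or.inr (Or.inl rfl)
    · -- a, m even, m = i : via uA
      subst m
      have hsp : spPos n i (false, i) = i := by simp only [spPos]; split_ifs <;> omega
      rw [hsp, spineV_i]
      refine ⟨Walk.cons (adjD' hL (specD9 he)) Walk.nil, ?_⟩
      intro w hw
      simp only [Walk.support_cons, Walk.support_nil, List.mem_cons, List.mem_singleton,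
        List.not_mem_nil, or_false] at hw
      rcases hw with rfl | rfl
      · exact Or.inl rfl
      · exact Or.inr (Or.inl rfl)
    · -- a, m even, m = i + 1 : via uB
      subst hc
      have hio : i % 2 = 1 := by omega
      have hsp : spPos n i (false, i + 1) = i + 1 := by simp only [spPos]; split_ifs <;> omega
      rw [hsp, spineV_i1]
      refine ⟨Walk.cons (adjD' hL (specD12 hio)) Walk.nil, ?_⟩
      intro w hw
      simp only [Walk.support_cons, Walk.support_nil, List.mem_cons, List.mem_singleton,
        List.not_mem_nil, or_false] at hw
      rcases hw with rfl | rfl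
      · exact Or.inl rfl
      · exact Or.inr (Or.inl rfl)
    · -- a, m even, i + 2 ≤ m : via v (m-1), u (m-1)
      have hsp : spPos n i (false, m) = m := by simp only [spPos]; split_ifs <;> omega
      have e : m - 1 + 1 = m := by omega
      rw [hsp, spineV_gt (by omega)]
      refine ⟨Walk.cons (adjD' hL (specD15 (m-1) (by omega) (by omega) (by omega) (a m)
          (Or.inr (by rw [e]))))
        (Walk.cons (adjD' hL (specD8 (m-1) (by omega) (by omega) (by omega))) Walk.nil), ?_⟩
      intro w hw
      simp only [Walk.support_cons, Walk.support_nil, List.mem_cons, List.mem_singleton,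
        List.not_mem_nil, or_false] at hw
      rcases hw with rfl | rfl | rfl
      · exact Or.inl rfl
      · exact Or.inr (Or.inr ⟨m - 1, by omega, by omega, by omega, rfl,
          by rw [if_neg (by omega : ¬ (m - 1 < i))]; omega⟩)
      · exact Or.inr (Or.inl rfl)
    · -- a, m odd ≥ 3, m ≤ i : via v (m-1), u (m-1)
      have hsp : spPos n i (false, m) = m - 1 := by simp only [spPos]; split_ifs <;> omega
      have e : m - 1 + 1 = m := by omega
      rw [hsp, spineV_lt (by omega)]
      refine ⟨Walk.cons (adjD' hL (specD14 (m-1) (by omega) (by omega) (by omega) (a m)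
          (Or.inr (by rw [e]))))
        (Walk.cons (adjD' hL (specD8 (m-1) (by omega) (by omega) (by omega))) Walk.nil), ?_⟩
      intro w hw
      simp only [Walk.support_cons, Walk.support_nil, List.mem_cons, List.mem_singleton,
        List.not_mem_nil, or_false] at hw
      rcases hw with rfl | rfl | rfl
      · exact Or.inl rfl
      · exact Or.inr (Or.inr ⟨m - 1, by omega, by omega, by omega, rfl,
          by rw [if_pos (by omega : m - 1 < i)]⟩)
      · exact Or.inr (Or.inl rfl)
    · -- a, m odd, i < m : via v m, u m
      have hsp : spPos n i (false, m) = m + 1 := by simp only [spPos]; split_ifs <;> omega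
      have hmn' : m ≤ n - 1 := by omega
      rw [hsp, spineV_gt (by omega)]
      have e : m + 1 - 1 = m := by omega
      rw [e]
      refine ⟨Walk.cons (adjD' hL (specD15 m (by omega) hmn' he (a m) (Or.inl rfl)))
        (Walk.cons (adjD' hL (specD8 m (by omega) hmn' (by omega))) Walk.nil), ?_⟩
      intro w hw
      simp only [Walk.support_cons, Walk.support_nil, List.mem_cons, List.mem_singleton,
        List.not_mem_nil, or_false] at hw
      rcases hw with rfl | rfl | rfl
      · exact Or.inl rfl
      · exact Or.inr (Or.inr ⟨m, by omega, by omega, by omega, rfl,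
          by rw [if_neg (by omega : ¬ (m < i))]⟩)
      · exact Or.inr (Or.inl rfl)
  case true =>
    rcases (show (m % 2 = 1 ∧ m < i) ∨ (m % 2 = 1 ∧ m = i) ∨ (m % 2 = 1 ∧ m = i + 1)
        ∨ (m % 2 = 1 ∧ i + 2 ≤ m) ∨ (m % 2 = 0 ∧ m ≤ i) ∨ (m % 2 = 0 ∧ i < m ∧ m = n)
        ∨ (m % 2 = 0 ∧ i < m ∧ m < n)
        from by omega) with ⟨he, hc⟩ | ⟨he, hc⟩ | ⟨he, hc⟩ | ⟨he, hc⟩ | ⟨he, hc⟩ |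
          ⟨he, hc, hc'⟩ | ⟨he, hc, hc'⟩
    · -- b, m odd, m < i : via v m, u m
      have hsp : spPos n i (true, m) = m := by simp only [spPos]; split_ifs <;> omega
      rw [hsp, spineV_lt hc]
      refine ⟨Walk.cons (adjD' hL (specD13 m (by omega) hc he (b m) (Or.inl rfl)))
        (Walk.cons (adjD' hL (specD8 m (by omega) (by omega) (by omega))) Walk.nil), ?_⟩
      intro w hw
      simp only [Walk.support_cons, Walk.support_nil, List.mem_cons, List.mem_singleton,
        List.not_mem_nil, or_false] at hw
      rcases hw with rfl | rfl | rfl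
      · exact Or.inl rfl
      · exact Or.inr (Or.inr ⟨m, by omega, by omega, by omega, rfl, by rw [if_pos hc]⟩)
      · exact Or.inr (Or.inl rfl)
    · -- b, m odd, m = i : via uA
      subst m
      have hsp : spPos n i (true, i) = i := by simp only [spPos]; split_ifs <;> omega
      rw [hsp, spineV_i]
      refine ⟨Walk.cons (adjD' hL (specD11 he)) Walk.nil, ?_⟩
      intro w hw
      simp only [Walk.support_cons, Walk.support_nil, List.mem_cons, List.mem_singleton,
        List.not_mem_nil, or_false] at hw
      rcases hw with rfl | rfl
      · exact Or.inl rfl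
      · exact Or.inr (Or.inl rfl)
    · -- b, m odd, m = i + 1 : via uB
      subst hc
      have hio : i % 2 = 0 := by omega
      have hsp : spPos n i (true, i + 1) = i + 1 := by simp only [spPos]; split_ifs <;> omega
      rw [hsp, spineV_i1]
      refine ⟨Walk.cons (adjD' hL (specD10 hio)) Walk.nil, ?_⟩
      intro w hw
      simp only [Walk.support_cons, Walk.support_nil, List.mem_cons, List.mem_singleton,
        List.not_mem_nil, or_false] at hw
      rcases hw with rfl | rfl
      · exact Or.inl rfl
      · exact Or.inr (Or.inl rfl)
    · -- b, m odd, i + 2 ≤ m : via v (m-1), u (m-1)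
      have hsp : spPos n i (true, m) = m := by simp only [spPos]; split_ifs <;> omega
      have e : m - 1 + 1 = m := by omega
      rw [hsp, spineV_gt (by omega)]
      refine ⟨Walk.cons (adjD' hL (specD16 (m-1) (by omega) (by omega) (by omega) (b m)
          (Or.inr (by rw [e]))))
        (Walk.cons (adjD' hL (specD8 (m-1) (by omega) (by omega) (by omega))) Walk.nil), ?_⟩
      intro w hw
      simp only [Walk.support_cons, Walk.support_nil, List.mem_cons, List.mem_singleton,
        List.not_mem_nil, or_false] at hw
      rcases hw with rfl | rfl | rfl
      · exact Or.inl rfl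
      · exact Or.inr (Or.inr ⟨m - 1, by omega, by omega, by omega, rfl,
          by rw [if_neg (by omega : ¬ (m - 1 < i))]; omega⟩)
      · exact Or.inr (Or.inl rfl)
    · -- b, m even, m ≤ i : via v (m-1), u (m-1)
      have hsp : spPos n i (true, m) = m - 1 := by simp only [spPos]; split_ifs <;> omega
      have e : m - 1 + 1 = m := by omega
      rw [hsp, spineV_lt (by omega)]
      refine ⟨Walk.cons (adjD' hL (specD13 (m-1) (by omega) (by omega) (by omega) (b m)
          (Or.inr (by rw [e]))))
        (Walk.cons (adjD' hL (specD8 (m-1) (by omega) (by omega) (by omega))) Walk.nil), ?_⟩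
      intro w hw
      simp only [Walk.support_cons, Walk.support_nil, List.mem_cons, List.mem_singleton,
        List.not_mem_nil, or_false] at hw
      rcases hw with rfl | rfl | rfl
      · exact Or.inl rfl
      · exact Or.inr (Or.inr ⟨m - 1, by omega, by omega, by omega, rfl,
          by rw [if_pos (by omega : m - 1 < i)]⟩)
      · exact Or.inr (Or.inl rfl)
    · -- b, m = n : direct to u (n-1)
      subst m
      have hsp : spPos n i (true, n) = n := by simp only [spPos]; split_ifs <;> omega
      rw [hsp, spineV_gt (by omega)]
      refine ⟨Walk.cons (adjD' hL specD7) Walk.nil, ?_⟩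
      intro w hw
      simp only [Walk.support_cons, Walk.support_nil, List.mem_cons, List.mem_singleton,
        List.not_mem_nil, or_false] at hw
      rcases hw with rfl | rfl
      · exact Or.inl rfl
      · exact Or.inr (Or.inl rfl)
    · -- b, m even, i < m < n : via v m, u m
      have hsp : spPos n i (true, m) = m + 1 := by simp only [spPos]; split_ifs <;> omega
      have hmn' : m ≤ n - 1 := by omega
      rw [hsp, spineV_gt (by omega)]
      have e : m + 1 - 1 = m := by omega
      rw [e]
      refine ⟨Walk.cons (adjD' hL (specD16 m hc hmn' he (b m) (Or.inl rfl)))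
        (Walk.cons (adjD' hL (specD8 m (by omega) hmn' (by omega))) Walk.nil), ?_⟩
      intro w hw
      simp only [Walk.support_cons, Walk.support_nil, List.mem_cons, List.mem_singleton,
        List.not_mem_nil, or_false] at hw
      rcases hw with rfl | rfl | rfl
      · exact Or.inl rfl
      · exact Or.inr (Or.inr ⟨m, by omega, by omega, by omega, rfl,
          by rw [if_neg (by omega : ¬ (m < i))]⟩)
      · exact Or.inr (Or.inl rfl)

lemma phi_le5 (j : ℕ) (p : Lbl) : phi j p ≤ 5 := by
  obtain ⟨sb, m⟩ := p
  cases sb <;>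
    simp only [phi, phiMain, phiSide, Bool.cond_false, Bool.cond_true] <;>
    split_ifs <;> omega

lemma spPos_bound0 (hn2 : n % 2 = 0) (hn6 : 6 ≤ n) (hi2 : 2 ≤ i) (hi' : i ≤ n - 2)
    (hj : 3 ≤ j) (hj' : j ≤ n - 1) (p : Lbl) (h1 : 1 ≤ p.2) (h2 : p.2 ≤ n)
    (hphi : phi j p = 0) : 1 ≤ spPos n i p ∧ spPos n i p ≤ j - 1 := by
  obtain ⟨sb, m⟩ := p
  cases sb <;>
    simp only [phi, phiMain, phiSide, Bool.cond_false, Bool.cond_true] at hphi <;>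
    simp only [spPos] <;>
    split_ifs at hphi ⊢ <;> omega

lemma spPos_bound5 (hn2 : n % 2 = 0) (hn6 : 6 ≤ n) (hi2 : 2 ≤ i) (hi' : i ≤ n - 2)
    (hj : 3 ≤ j) (hj' : j ≤ n - 1) (p : Lbl) (h1 : 1 ≤ p.2) (h2 : p.2 ≤ n)
    (hphi : phi j p = 5) : j ≤ spPos n i p ∧ spPos n i p ≤ n := by
  obtain ⟨sb, m⟩ := p
  cases sb <;>
    simp only [phi, phiMain, phiSide, Bool.cond_false, Bool.cond_true] at hphi <;>
    simp only [spPos] <;>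
    split_ifs at hphi ⊢ <;> omega

lemma xelt_mem (hn6 : 6 ≤ n) (hj : 3 ≤ j) (hj' : j ≤ n - 1) (s : ℕ) :
    xelt j s ∈ Xset n := by
  simp only [xelt, a, b, Xset, Set.mem_setOf_eq]
  split_ifs <;> simp <;> omega

lemma phi_false (j m : ℕ) :
    phi j (false, m) = if j % 2 = 0 then phiSide j m else phiMain j m := rfl

lemma phi_true (j m : ℕ) :
    phi j (true, m) = if j % 2 = 0 then phiMain j m else phiSide j m := rfl

lemma phiSide_eq1 {j m : ℕ} (h : m + 2 = j) : phiSide j m = 1 := by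
  unfold phiSide; rw [if_neg (by omega), if_pos (by omega)]

lemma phiSide_eq2 {j m : ℕ} (h : m + 1 = j) : phiSide j m = 2 := by
  unfold phiSide; rw [if_neg (by omega), if_neg (by omega), if_pos (by omega)]

lemma phiMain_eq3 {j m : ℕ} (h : m = j) : phiMain j m = 3 := by
  unfold phiMain; rw [if_neg (by omega), if_pos (by omega)]

lemma phiMain_eq4 {j m : ℕ} (h : m = j + 1) : phiMain j m = 4 := by
  unfold phiMain; rw [if_neg (by omega), if_neg (by omega), if_pos (by omega)]

lemma phi_xelt (hj : 3 ≤ j) {s : ℕ} (h1 : 1 ≤ s) (h4 : s ≤ 4) : phi j (xelt j s) = s := by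
  rcases Nat.mod_two_eq_zero_or_one j with hj2 | hj2 <;>
    rcases (show s = 1 ∨ s = 2 ∨ s = 3 ∨ s = 4 from by omega) with rfl | rfl | rfl | rfl
  · unfold xelt; rw [if_pos hj2, if_pos rfl]
    show phi j (false, j - 2) = 1
    rw [phi_false, if_pos hj2, phiSide_eq1 (by omega)]
  · unfold xelt; rw [if_pos hj2, if_neg (by omega), if_pos rfl]
    show phi j (false, j - 1) = 2
    rw [phi_false, if_pos hj2, phiSide_eq2 (by omega)]
  · unfold xelt; rw [if_pos hj2, if_neg (by omega), if_neg (by omega), if_pos rfl]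
    show phi j (true, j) = 3
    rw [phi_true, if_pos hj2, phiMain_eq3 rfl]
  · unfold xelt; rw [if_pos hj2, if_neg (by omega), if_neg (by omega), if_neg (by omega)]
    show phi j (true, j + 1) = 4
    rw [phi_true, if_pos hj2, phiMain_eq4 rfl]
  · unfold xelt; rw [if_neg (by omega), if_pos rfl]
    show phi j (true, j - 2) = 1
    rw [phi_true, if_neg (by omega), phiSide_eq1 (by omega)]
  · unfold xelt; rw [if_neg (by omega), if_neg (by omega), if_pos rfl]
    show phi j (true, j - 1) = 2
    rw [phi_true, if_neg (by omega), phiSide_eq2 (by omega)]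
  · unfold xelt; rw [if_neg (by omega), if_neg (by omega), if_neg (by omega), if_pos rfl]
    show phi j (false, j) = 3
    rw [phi_false, if_neg (by omega), phiMain_eq3 rfl]
  · unfold xelt; rw [if_neg (by omega), if_neg (by omega), if_neg (by omega), if_neg (by omega)]
    show phi j (false, j + 1) = 4
    rw [phi_false, if_neg (by omega), phiMain_eq4 rfl]

lemma phi_unique (hj : 3 ≤ j) {s : ℕ} (h1 : 1 ≤ s) (h4 : s ≤ 4) (p : Lbl)
    (hphi : phi j p = s) : p = xelt j s := by
  obtain ⟨sb, m⟩ := p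
  rcases Nat.mod_two_eq_zero_or_one j with hj2 | hj2 <;> cases sb
  · rw [phi_false, if_pos hj2] at hphi
    unfold phiSide at hphi
    split_ifs at hphi with c1 c2 c3
    · exfalso; omega
    · unfold xelt; rw [if_pos hj2, if_pos (by omega : s = 1)]
      show (false, m) = ((false, j - 2) : Lbl)
      rw [show m = j - 2 from by omega]
    · unfold xelt; rw [if_pos hj2, if_neg (by omega), if_pos (by omega : s = 2)]
      show (false, m) = ((false, j - 1) : Lbl)
      rw [show m = j - 1 from by omega]
    · exfalso; omega
  · rw [phi_true, if_pos hj2] at hphi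
    unfold phiMain at hphi
    split_ifs at hphi with c1 c2 c3
    · exfalso; omega
    · unfold xelt
      rw [if_pos hj2, if_neg (by omega), if_neg (by omega), if_pos (by omega : s = 3)]
      show (true, m) = ((true, j) : Lbl)
      rw [show m = j from by omega]
    · unfold xelt
      rw [if_pos hj2, if_neg (by omega), if_neg (by omega), if_neg (by omega)]
      have : s = 4 := by omega
      show (true, m) = ((true, j + 1) : Lbl)
      rw [show m = j + 1 from by omega]
    · exfalso; omega
  · rw [phi_false, if_neg (by omega)] at hphi
    unfold phiMain at hphi
    split_ifs at hphi with c1 c2 c3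
    · exfalso; omega
    · unfold xelt
      rw [if_neg (by omega), if_neg (by omega), if_neg (by omega), if_pos (by omega : s = 3)]
      show (false, m) = ((false, j) : Lbl)
      rw [show m = j from by omega]
    · unfold xelt
      rw [if_neg (by omega), if_neg (by omega), if_neg (by omega), if_neg (by omega)]
      show (false, m) = ((false, j + 1) : Lbl)
      rw [show m = j + 1 from by omega]
    · exfalso; omega
  · rw [phi_true, if_neg (by omega)] at hphi
    unfold phiSide at hphi
    split_ifs at hphi with c1 c2 c3
    · exfalso; omega
    · unfold xelt; rw [if_neg (by omega), if_pos (by omega : s = 1)]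
      show (true, m) = ((true, j - 2) : Lbl)
      rw [show m = j - 2 from by omega]
    · unfold xelt; rw [if_neg (by omega), if_neg (by omega), if_pos (by omega : s = 2)]
      show (true, m) = ((true, j - 1) : Lbl)
      rw [show m = j - 1 from by omega]
    · exfalso; omega

end LobsterAux2
section LobsterAux3

open SimpleGraph

def C0set (n i j : ℕ) (T : PhyloTree (Xset n)) (u v : ℕ → T.V) (uA uB : T.V) : Set T.V :=
  {w | (∃ p ∈ Xset n, phi j p = 0 ∧ w = T.leaf p) ∨
    (∃ t, 1 ≤ t ∧ t ≤ j - 1 ∧ w = spineV i u uA uB t) ∨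
    (∃ k, 1 ≤ k ∧ k ≤ n - 1 ∧ k ≠ i ∧ (if k < i then k else k + 1) ≤ j - 1 ∧ w = v k)}

def C5set (n i j : ℕ) (T : PhyloTree (Xset n)) (u v : ℕ → T.V) (uA uB : T.V) : Set T.V :=
  {w | (∃ p ∈ Xset n, phi j p = 5 ∧ w = T.leaf p) ∨
    (∃ t, j ≤ t ∧ t ≤ n ∧ w = spineV i u uA uB t) ∨
    (∃ k, 1 ≤ k ∧ k ≤ n - 1 ∧ k ≠ i ∧ j ≤ (if k < i then k else k + 1) ∧ w = v k)}

variable {n i j : ℕ} {T : PhyloTree (Xset n)} {u v : ℕ → T.V} {uA uB : T.V}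

lemma sub0 (hL : IsLobsterMid n i T u v uA uB) (hn2 : n % 2 = 0) (hn6 : 6 ≤ n)
    (hi2 : 2 ≤ i) (hi' : i ≤ n - 2) (hj : 3 ≤ j) (hj' : j ≤ n - 1) :
    subtree T {x | phi j x = 0} ⊆ C0set n i j T u v uA uB := by
  apply subtree_subset_of_walks T _ _ (spineV i u uA uB 1)
  rintro x ⟨hx0, hxX⟩
  have hphi : phi j x = 0 := hx0
  obtain ⟨W1, hW1⟩ := attach hL hn2 hn6 hi2 hi' x hxX
  obtain ⟨hb1, hb2⟩ := spPos_bound0 hn2 hn6 hi2 hi' hj hj' x hxX.1 hxX.2 hphi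
  obtain ⟨W2, hW2⟩ :=
    spine_walk' hL hi2 hi' hn6 (le_refl 1) hb1 (show spPos n i x ≤ n by omega)
  refine ⟨W1.append W2, ?_⟩
  intro w hw
  rw [Walk.mem_support_append_iff] at hw
  simp only [C0set, Set.mem_setOf_eq]
  rcases hw with hw | hw
  · rcases hW1 w hw with rfl | rfl | ⟨k, hk1, hk2, hk3, rfl, hk5⟩
    · exact Or.inl ⟨x, hxX, hphi, rfl⟩
    · exact Or.inr (Or.inl ⟨spPos n i x, hb1, hb2, rfl⟩)
    · exact Or.inr (Or.inr ⟨k, hk1, hk2, hk3, by omega, rfl⟩)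
  · obtain ⟨s', hs1, hs2, rfl⟩ := hW2 w hw
    exact Or.inr (Or.inl ⟨s', hs1, by omega, rfl⟩)

lemma sub5 (hL : IsLobsterMid n i T u v uA uB) (hn2 : n % 2 = 0) (hn6 : 6 ≤ n)
    (hi2 : 2 ≤ i) (hi' : i ≤ n - 2) (hj : 3 ≤ j) (hj' : j ≤ n - 1) :
    subtree T {x | phi j x = 5} ⊆ C5set n i j T u v uA uB := by
  apply subtree_subset_of_walks T _ _ (spineV i u uA uB n)
  rintro x ⟨hx0, hxX⟩
  have hphi : phi j x = 5 := hx0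
  obtain ⟨W1, hW1⟩ := attach hL hn2 hn6 hi2 hi' x hxX
  obtain ⟨hb1, hb2⟩ := spPos_bound5 hn2 hn6 hi2 hi' hj hj' x hxX.1 hxX.2 hphi
  obtain ⟨W2, hW2⟩ :=
    spine_walk' hL hi2 hi' hn6 (show 1 ≤ spPos n i x by omega) hb2 (le_refl n)
  refine ⟨W1.append W2.reverse, ?_⟩
  intro w hw
  rw [Walk.mem_support_append_iff] at hw
  simp only [C5set, Set.mem_setOf_eq]
  rcases hw with hw | hw
  · rcases hW1 w hw with rfl | rfl | ⟨k, hk1, hk2, hk3, rfl, hk5⟩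
    · exact Or.inl ⟨x, hxX, hphi, rfl⟩
    · exact Or.inr (Or.inl ⟨spPos n i x, hb1, hb2, rfl⟩)
    · exact Or.inr (Or.inr ⟨k, hk1, hk2, hk3, by omega, rfl⟩)
  · rw [Walk.support_reverse, List.mem_reverse] at hw
    obtain ⟨s', hs1, hs2, rfl⟩ := hW2 w hw
    exact Or.inr (Or.inl ⟨s', by omega, hs2, rfl⟩)

lemma subS (hj : 3 ≤ j) {s : ℕ} (hs1 : 1 ≤ s) (hs4 : s ≤ 4) :
    subtree T {x | phi j x = s} ⊆ {T.leaf (xelt j s)} := by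
  apply subtree_subset_of_walks T _ _ (T.leaf (xelt j s))
  rintro x ⟨hx0, hxX⟩
  have hx : x = xelt j s := phi_unique hj hs1 hs4 x hx0
  subst hx
  refine ⟨Walk.nil, ?_⟩
  intro w hw
  simp only [Walk.support_nil, List.mem_singleton] at hw
  exact hw

lemma subE {s : ℕ} (hs : 6 ≤ s) : subtree T {x | phi j x = s} ⊆ (∅ : Set T.V) := by
  rintro w ⟨x, ⟨hx0, hxX⟩, -⟩
  have h5 := phi_le5 j x
  have hx : phi j x = s := hx0
  exfalso; omega

lemma leaf_notin_C0 (hL : IsLobsterMid n i T u v uA uB) (hn2 : n % 2 = 0) (hn6 : 6 ≤ n)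
    (hi2 : 2 ≤ i) (hi' : i ≤ n - 2) (hj : 3 ≤ j) (hj' : j ≤ n - 1)
    (q : Lbl) (hqX : q ∈ Xset n) (hq : phi j q ≠ 0) :
    T.leaf q ∉ C0set n i j T u v uA uB := by
  intro hmem
  simp only [C0set, Set.mem_setOf_eq] at hmem
  rcases hmem with ⟨p, hpX, hp0, he⟩ | ⟨t, ht1, ht2, he⟩ | ⟨k, hk1, hk2, hk3, hk4, he⟩
  · exact hq (by rw [T.leaf_injOn hqX hpX he]; exact hp0)
  · exact leaf_ne_spineV hL hi2 hi' hn6 hqX ht1 (by omega) he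
  · exact ((hL.2.2.1 q hqX).2.2 k hk1 hk2 hk3).2 he

lemma leaf_notin_C5 (hL : IsLobsterMid n i T u v uA uB) (hn2 : n % 2 = 0) (hn6 : 6 ≤ n)
    (hi2 : 2 ≤ i) (hi' : i ≤ n - 2) (hj : 3 ≤ j) (hj' : j ≤ n - 1)
    (q : Lbl) (hqX : q ∈ Xset n) (hq : phi j q ≠ 5) :
    T.leaf q ∉ C5set n i j T u v uA uB := by
  intro hmem
  simp only [C5set, Set.mem_setOf_eq] at hmem
  rcases hmem with ⟨p, hpX, hp0, he⟩ | ⟨t, ht1, ht2, he⟩ | ⟨k, hk1, hk2, hk3, hk4, he⟩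
  · exact hq (by rw [T.leaf_injOn hqX hpX he]; exact hp0)
  · exact leaf_ne_spineV hL hi2 hi' hn6 hqX (by omega) ht2 he
  · exact ((hL.2.2.1 q hqX).2.2 k hk1 hk2 hk3).2 he

lemma disj05 (hL : IsLobsterMid n i T u v uA uB) (hn2 : n % 2 = 0) (hn6 : 6 ≤ n)
    (hi2 : 2 ≤ i) (hi' : i ≤ n - 2) (hj : 3 ≤ j) (hj' : j ≤ n - 1) (w : T.V)
    (h0 : w ∈ C0set n i j T u v uA uB) (h5 : w ∈ C5set n i j T u v uA uB) : False := by
  simp only [C0set, Set.mem_setOf_eq] at h0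
  simp only [C5set, Set.mem_setOf_eq] at h5
  rcases h0 with ⟨p, hpX, hp0, rfl⟩ | ⟨t, ht1, ht2, rfl⟩ | ⟨k, hk1, hk2, hk3, hk4, rfl⟩ <;>
    rcases h5 with ⟨q, hqX, hq5, he⟩ | ⟨t', ht1', ht2', he⟩ | ⟨k', hk1', hk2', hk3', hk4', he⟩
  · have := T.leaf_injOn hpX hqX he
    rw [this] at hp0; omega
  · exact leaf_ne_spineV hL hi2 hi' hn6 hpX (by omega) ht2' he
  · exact ((hL.2.2.1 p hpX).2.2 k' hk1' hk2' hk3').2 he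
  · exact leaf_ne_spineV hL hi2 hi' hn6 hqX ht1 (by omega) he.symm
  · have := spineV_inj hL hi2 hi' hn6 ht1 (by omega) (by omega) ht2' he
    omega
  · exact spineV_ne_v hL hi2 hi' hn6 ht1 (by omega) hk1' hk2' hk3' he
  · exact ((hL.2.2.1 q hqX).2.2 k hk1 hk2 hk3).2 he.symm
  · exact spineV_ne_v hL hi2 hi' hn6 (by omega) ht2' hk1 hk2 hk3 he.symm
  · have hkk : k = k' := (hL.1 k k' hk1 hk2 hk3 hk1' hk2' hk3').2.1 he
    subst hkk
    by_cases hlt : k < i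
    · rw [if_pos hlt] at hk4 hk4'; omega
    · rw [if_neg hlt] at hk4 hk4'; omega

end LobsterAux3
theorem lobsterMid_displays_phi (n i j : ℕ) (hn : Even n) (hn6 : 6 ≤ n)
    (hi : 2 ≤ i) (hi' : i ≤ n - 2) (hj : 3 ≤ j) (hj' : j ≤ n - 1)
    (T : PhyloTree (Xset n)) (u v : ℕ → T.V) (uA uB : T.V)
    (h : IsLobsterMid n i T u v uA uB) :
    displays T (phi j) := by
  have hn2 : n % 2 = 0 := Nat.even_iff.mp hn
  intro s t hst
  rw [Set.disjoint_left]
  intro w hws hwt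
  rcases (show s = 0 ∨ s = 5 ∨ (1 ≤ s ∧ s ≤ 4) ∨ 6 ≤ s from by omega) with rfl | rfl | hs | hs <;>
    rcases (show t = 0 ∨ t = 5 ∨ (1 ≤ t ∧ t ≤ 4) ∨ 6 ≤ t from by omega) with rfl | rfl | ht | ht
  · exact hst rfl
  · exact disj05 h hn2 hn6 hi hi' hj hj' w (sub0 h hn2 hn6 hi hi' hj hj' hws)
      (sub5 h hn2 hn6 hi hi' hj hj' hwt)
  · have h2 : w = T.leaf (xelt j t) := subS hj ht.1 ht.2 hwt
    exact leaf_notin_C0 h hn2 hn6 hi hi' hj hj' (xelt j t) (xelt_mem hn6 hj hj' t)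
      (by rw [phi_xelt hj ht.1 ht.2]; omega) (h2 ▸ sub0 h hn2 hn6 hi hi' hj hj' hws)
  · exact subE ht hwt
  · exact disj05 h hn2 hn6 hi hi' hj hj' w (sub0 h hn2 hn6 hi hi' hj hj' hwt)
      (sub5 h hn2 hn6 hi hi' hj hj' hws)
  · exact hst rfl
  · have h2 : w = T.leaf (xelt j t) := subS hj ht.1 ht.2 hwt
    exact leaf_notin_C5 h hn2 hn6 hi hi' hj hj' (xelt j t) (xelt_mem hn6 hj hj' t)
      (by rw [phi_xelt hj ht.1 ht.2]; omega) (h2 ▸ sub5 h hn2 hn6 hi hi' hj hj' hws)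
  · exact subE ht hwt
  · have h2 : w = T.leaf (xelt j s) := subS hj hs.1 hs.2 hws
    exact leaf_notin_C0 h hn2 hn6 hi hi' hj hj' (xelt j s) (xelt_mem hn6 hj hj' s)
      (by rw [phi_xelt hj hs.1 hs.2]; omega) (h2 ▸ sub0 h hn2 hn6 hi hi' hj hj' hwt)
  · have h2 : w = T.leaf (xelt j s) := subS hj hs.1 hs.2 hws
    exact leaf_notin_C5 h hn2 hn6 hi hi' hj hj' (xelt j s) (xelt_mem hn6 hj hj' s)
      (by rw [phi_xelt hj hs.1 hs.2]; omega) (h2 ▸ sub5 h hn2 hn6 hi hi' hj hj' hwt)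
  · have e1 : w = T.leaf (xelt j s) := subS hj hs.1 hs.2 hws
    have e2 : w = T.leaf (xelt j t) := subS hj ht.1 ht.2 hwt
    have e3 : xelt j s = xelt j t :=
      T.leaf_injOn (xelt_mem hn6 hj hj' s) (xelt_mem hn6 hj hj' t) (e1.symm.trans e2)
    apply hst
    rw [← phi_xelt hj hs.1 hs.2, e3, phi_xelt hj ht.1 ht.2]
  · exact subE ht hwt
  · exact subE hs hws
  · exact subE hs hws
  · exact subE hs hws
  · exact subE hs hws

end PP
end

section
/- For even n ≥ 6 and any 3 ≤ i ≤ n-1, the lobster tree A^iB displays both Ω_A and Ω_B. -/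
namespace PP

/-- The edges of the lobster `A^iB`: central path a₁,u₁,…,u_{i-2},u_A,u_B,u_i,…,u_{n-1},bₙ;
edges u_k v_k for k ≠ i-1; if i is even, u_A is adjacent to aᵢ and u_B to b_{i-1};
if i is odd, u_A is adjacent to bᵢ and u_B to a_{i-1}; for k < i-1, v_k is adjacent to
b_k,b_{k+1} (k odd) or a_k,a_{k+1} (k even); for k > i-1 the a/b roles are swapped. -/
def AdjSpecJag (n i : ℕ) {X : Set Lbl} (T : PhyloTree X) (u v : ℕ → T.V)
    (uA uB : T.V) (w w' : T.V) : Prop :=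
  (w = T.leaf (a 1) ∧ w' = u 1) ∨
  (∃ k, 1 ≤ k ∧ k + 1 ≤ i - 2 ∧ w = u k ∧ w' = u (k + 1)) ∨
  (w = u (i - 2) ∧ w' = uA) ∨
  (w = uA ∧ w' = uB) ∨
  (w = uB ∧ w' = u i) ∨
  (∃ k, i ≤ k ∧ k + 1 ≤ n - 1 ∧ w = u k ∧ w' = u (k + 1)) ∨
  (w = u (n - 1) ∧ w' = T.leaf (b n)) ∨
  (∃ k, 1 ≤ k ∧ k ≤ n - 1 ∧ k ≠ i - 1 ∧ w = u k ∧ w' = v k) ∨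
  (i % 2 = 0 ∧ w = uA ∧ w' = T.leaf (a i)) ∨
  (i % 2 = 0 ∧ w = uB ∧ w' = T.leaf (b (i - 1))) ∨
  (i % 2 = 1 ∧ w = uA ∧ w' = T.leaf (b i)) ∨
  (i % 2 = 1 ∧ w = uB ∧ w' = T.leaf (a (i - 1))) ∨
  (∃ k, 1 ≤ k ∧ k + 1 < i ∧ k % 2 = 1 ∧ w = v k ∧
      (w' = T.leaf (b k) ∨ w' = T.leaf (b (k + 1)))) ∨
  (∃ k, 1 ≤ k ∧ k + 1 < i ∧ k % 2 = 0 ∧ w = v k ∧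
      (w' = T.leaf (a k) ∨ w' = T.leaf (a (k + 1)))) ∨
  (∃ k, i - 1 < k ∧ k ≤ n - 1 ∧ k % 2 = 1 ∧ w = v k ∧
      (w' = T.leaf (a k) ∨ w' = T.leaf (a (k + 1)))) ∨
  (∃ k, i - 1 < k ∧ k ≤ n - 1 ∧ k % 2 = 0 ∧ w = v k ∧
      (w' = T.leaf (b k) ∨ w' = T.leaf (b (k + 1))))

/-- `T`, with internal vertices `u k`, `v k` (k ∈ [n-1] \ {i-1}) and `uA`, `uB`,
is the lobster `A^iB`. -/
def IsLobsterJag (n i : ℕ) (T : PhyloTree (Xset n)) (u v : ℕ → T.V) (uA uB : T.V) : Prop :=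
  (∀ k l, 1 ≤ k → k ≤ n - 1 → k ≠ i - 1 → 1 ≤ l → l ≤ n - 1 → l ≠ i - 1 →
      (u k = u l → k = l) ∧ (v k = v l → k = l) ∧ u k ≠ v l ∧
      u k ≠ uA ∧ u k ≠ uB ∧ v k ≠ uA ∧ v k ≠ uB) ∧
  uA ≠ uB ∧
  (∀ p ∈ Xset n, T.leaf p ≠ uA ∧ T.leaf p ≠ uB ∧
      ∀ k, 1 ≤ k → k ≤ n - 1 → k ≠ i - 1 → T.leaf p ≠ u k ∧ T.leaf p ≠ v k) ∧
  (∀ w : T.V, (∃ p ∈ Xset n, T.leaf p = w) ∨ w = uA ∨ w = uB ∨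
      (∃ k, 1 ≤ k ∧ k ≤ n - 1 ∧ k ≠ i - 1 ∧ (u k = w ∨ v k = w))) ∧
  (∀ w w' : T.V, T.G.Adj w w' ↔
      (AdjSpecJag n i T u v uA uB w w' ∨ AdjSpecJag n i T u v uA uB w' w))

section CutLemmas

variable {V : Type} {G : SimpleGraph V} {P : V → Prop} {p0 q0 : V}

lemma cross_mem
    (H : ∀ w w' : V, G.Adj w w' → ¬(P w ↔ P w') →
      (w = p0 ∧ w' = q0) ∨ (w = q0 ∧ w' = p0)) :
    ∀ {x y : V} (q : G.Walk x y), ¬(P x ↔ P y) →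
      p0 ∈ q.support ∧ q0 ∈ q.support := by
  intro x y q
  induction q with
  | nil => exact fun hxy => absurd Iff.rfl hxy
  | @cons x x' y h q ih =>
    intro hxy
    by_cases hc : P x ↔ P x'
    · have h2 : ¬(P x' ↔ P y) := fun hh => hxy (hc.trans hh)
      obtain ⟨m1, m2⟩ := ih h2
      refine ⟨?_, ?_⟩ <;> rw [SimpleGraph.Walk.support_cons] <;>
        exact List.mem_cons_of_mem _ (by assumption)
    · rcases H x x' h hc with ⟨h1, h2⟩ | ⟨h1, h2⟩ <;> subst h1 <;> subst h2 <;>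
        rw [SimpleGraph.Walk.support_cons] <;>
        exact ⟨by simp [SimpleGraph.Walk.start_mem_support],
               by simp [SimpleGraph.Walk.start_mem_support]⟩

lemma path_const
    (H : ∀ w w' : V, G.Adj w w' → ¬(P w ↔ P w') →
      (w = p0 ∧ w' = q0) ∨ (w = q0 ∧ w' = p0)) :
    ∀ {x y : V} (p : G.Walk x y), p.IsPath → (P x ↔ P y) →
      ∀ w ∈ p.support, (P w ↔ P x) := by
  intro x y p
  induction p with
  | nil =>
    intro _ _ w hw
    rw [SimpleGraph.Walk.support_nil, List.mem_singleton] at hw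
    subst hw; exact Iff.rfl
  | @cons x x' y h q ih =>
    intro hp hxy w hw
    rw [SimpleGraph.Walk.support_cons, List.mem_cons] at hw
    rw [SimpleGraph.Walk.cons_isPath_iff] at hp
    rcases hw with rfl | hw
    · exact Iff.rfl
    by_cases hc : P x ↔ P x'
    · exact (ih hp.1 (hc.symm.trans hxy) w hw).trans hc.symm
    · have h2 : ¬(P x' ↔ P y) := fun hh => hc (hxy.trans hh.symm)
      obtain ⟨m1, m2⟩ := cross_mem H q h2
      rcases H x x' h hc with ⟨h1, -⟩ | ⟨h1, -⟩
      · subst h1; exact absurd m1 hp.2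
      · subst h1; exact absurd m2 hp.2

end CutLemmas

lemma displays_of_cut {L : Type} {X : Set L} (T : PhyloTree X) (χ : L → ℕ)
    (P : T.V → Prop) (p0 q0 : T.V)
    (H : ∀ w w' : T.V, T.G.Adj w w' → ¬(P w ↔ P w') →
      (w = p0 ∧ w' = q0) ∨ (w = q0 ∧ w' = p0))
    (hlf : ∀ x ∈ X, ∀ y ∈ X, ((P (T.leaf x) ↔ P (T.leaf y)) ↔ χ x = χ y)) :
    displays T χ := by
  intro s t hst
  rw [Set.disjoint_left]
  intro w hws hwt
  simp only [subtree, Set.mem_setOf_eq] at hws hwt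
  obtain ⟨x, hx, y, hy, p, hp, hwp⟩ := hws
  obtain ⟨x', hx', y', hy', p', hp', hwp'⟩ := hwt
  have hxs : χ x = s := hx.1
  have hys : χ y = s := hy.1
  have hxt : χ x' = t := hx'.1
  have hyt : χ y' = t := hy'.1
  have hxy : P (T.leaf x) ↔ P (T.leaf y) :=
    (hlf x hx.2 y hy.2).mpr (by rw [hxs, hys])
  have e1 : P w ↔ P (T.leaf x) := path_const H p hp hxy w hwp
  have hxy' : P (T.leaf x') ↔ P (T.leaf y') :=
    (hlf x' hx'.2 y' hy'.2).mpr (by rw [hxt, hyt])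
  have e2 : P w ↔ P (T.leaf x') := path_const H p' hp' hxy' w hwp'
  have hxx : χ x = χ x' := (hlf x hx.2 x' hx'.2).mp (e1.symm.trans e2)
  exact hst (by omega)

/-- The small side for `Ω_A`: the leaves `a₁, b₁, b₂` and the internal vertices `u₁, v₁`. -/
def sideA {X : Set Lbl} (T : PhyloTree X) (u v : ℕ → T.V) (w : T.V) : Prop :=
  w = T.leaf (a 1) ∨ w = T.leaf (b 1) ∨ w = T.leaf (b 2) ∨ w = u 1 ∨ w = v 1

/-- The small side for `Ω_B`: the leaves `a_{n-1}, aₙ, bₙ` and `u_{n-1}, v_{n-1}`. -/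
def sideB (n : ℕ) {X : Set Lbl} (T : PhyloTree X) (u v : ℕ → T.V) (w : T.V) : Prop :=
  w = T.leaf (a (n-1)) ∨ w = T.leaf (a n) ∨ w = T.leaf (b n) ∨ w = u (n-1) ∨ w = v (n-1)


theorem lobsterJag_displays_Omegas (n i : ℕ) (hn : Even n) (hn6 : 6 ≤ n)
    (hi : 3 ≤ i) (hi' : i ≤ n - 1)
    (T : PhyloTree (Xset n)) (u v : ℕ → T.V) (uA uB : T.V)
    (h : IsLobsterJag n i T u v uA uB) :
    displays T OmA ∧ displays T (OmB n) := by
  obtain ⟨hdist, huAB, hleafne, _hsurj, hadj⟩ := h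
  have hn2 : n % 2 = 0 := Nat.even_iff.mp hn
  have haX : ∀ j, 1 ≤ j → j ≤ n → (a j) ∈ Xset n := fun j h1 h2 => ⟨h1, h2⟩
  have hbX : ∀ j, 1 ≤ j → j ≤ n → (b j) ∈ Xset n := fun j h1 h2 => ⟨h1, h2⟩
  have hinj : ∀ {p q : Lbl}, p ∈ Xset n → q ∈ Xset n → T.leaf p = T.leaf q → p = q :=
    fun hp hq hpq => T.leaf_injOn hp hq hpq
  -- helpers for sideA
  have hPAu : ∀ k, 1 ≤ k → k ≤ n - 1 → k ≠ i - 1 → (sideA T u v (u k) ↔ k = 1) := by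
    intro k h1 h2 h3
    have hv := hdist k 1 h1 h2 h3 le_rfl (by omega) (by omega)
    simp only [sideA]
    constructor
    · rintro (hh | hh | hh | hh | hh)
      · exact absurd hh.symm ((hleafne (a 1) (haX 1 le_rfl (by omega))).2.2 k h1 h2 h3).1
      · exact absurd hh.symm ((hleafne (b 1) (hbX 1 le_rfl (by omega))).2.2 k h1 h2 h3).1
      · exact absurd hh.symm ((hleafne (b 2) (hbX 2 (by omega) (by omega))).2.2 k h1 h2 h3).1
      · exact hv.1 hh
      · exact absurd hh hv.2.2.1
    · rintro rfl
      exact Or.inr (Or.inr (Or.inr (Or.inl rfl)))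
  have hPAv : ∀ k, 1 ≤ k → k ≤ n - 1 → k ≠ i - 1 → (sideA T u v (v k) ↔ k = 1) := by
    intro k h1 h2 h3
    have hv := hdist k 1 h1 h2 h3 le_rfl (by omega) (by omega)
    have hv' := hdist 1 k le_rfl (by omega) (by omega) h1 h2 h3
    simp only [sideA]
    constructor
    · rintro (hh | hh | hh | hh | hh)
      · exact absurd hh.symm ((hleafne (a 1) (haX 1 le_rfl (by omega))).2.2 k h1 h2 h3).2
      · exact absurd hh.symm ((hleafne (b 1) (hbX 1 le_rfl (by omega))).2.2 k h1 h2 h3).2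
      · exact absurd hh.symm ((hleafne (b 2) (hbX 2 (by omega) (by omega))).2.2 k h1 h2 h3).2
      · exact absurd hh.symm hv'.2.2.1
      · exact hv.2.1 hh
    · rintro rfl
      exact Or.inr (Or.inr (Or.inr (Or.inr rfl)))
  have hPAla : ∀ j, 1 ≤ j → j ≤ n → (sideA T u v (T.leaf (a j)) ↔ j = 1) := by
    intro j h1 h2
    simp only [sideA]
    constructor
    · rintro (hh | hh | hh | hh | hh)
      · exact congrArg Prod.snd (hinj (haX j h1 h2) (haX 1 le_rfl (by omega)) hh)
      · exact absurd (congrArg Prod.fst (hinj (haX j h1 h2) (hbX 1 le_rfl (by omega)) hh))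
          Bool.false_ne_true
      · exact absurd (congrArg Prod.fst (hinj (haX j h1 h2) (hbX 2 (by omega) (by omega)) hh))
          Bool.false_ne_true
      · exact absurd hh ((hleafne (a j) (haX j h1 h2)).2.2 1 le_rfl (by omega) (by omega)).1
      · exact absurd hh ((hleafne (a j) (haX j h1 h2)).2.2 1 le_rfl (by omega) (by omega)).2
    · rintro rfl
      exact Or.inl rfl
  have hPAlb : ∀ j, 1 ≤ j → j ≤ n → (sideA T u v (T.leaf (b j)) ↔ (j = 1 ∨ j = 2)) := by
    intro j h1 h2
    simp only [sideA]
    constructor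
    · rintro (hh | hh | hh | hh | hh)
      · exact absurd (congrArg Prod.fst (hinj (hbX j h1 h2) (haX 1 le_rfl (by omega)) hh))
          (fun hh => Bool.false_ne_true hh.symm)
      · exact Or.inl (congrArg Prod.snd (hinj (hbX j h1 h2) (hbX 1 le_rfl (by omega)) hh))
      · exact Or.inr (congrArg Prod.snd (hinj (hbX j h1 h2) (hbX 2 (by omega) (by omega)) hh))
      · exact absurd hh ((hleafne (b j) (hbX j h1 h2)).2.2 1 le_rfl (by omega) (by omega)).1
      · exact absurd hh ((hleafne (b j) (hbX j h1 h2)).2.2 1 le_rfl (by omega) (by omega)).2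
    · rintro (rfl | rfl)
      · exact Or.inr (Or.inl rfl)
      · exact Or.inr (Or.inr (Or.inl rfl))
  have hPAuA : ¬ sideA T u v uA := by
    have hv := hdist 1 1 le_rfl (by omega) (by omega) le_rfl (by omega) (by omega)
    simp only [sideA]
    rintro (hh | hh | hh | hh | hh)
    · exact (hleafne (a 1) (haX 1 le_rfl (by omega))).1 hh.symm
    · exact (hleafne (b 1) (hbX 1 le_rfl (by omega))).1 hh.symm
    · exact (hleafne (b 2) (hbX 2 (by omega) (by omega))).1 hh.symm
    · exact hv.2.2.2.1 hh.symm
    · exact hv.2.2.2.2.2.1 hh.symm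
  have hPAuB : ¬ sideA T u v uB := by
    have hv := hdist 1 1 le_rfl (by omega) (by omega) le_rfl (by omega) (by omega)
    simp only [sideA]
    rintro (hh | hh | hh | hh | hh)
    · exact (hleafne (a 1) (haX 1 le_rfl (by omega))).2.1 hh.symm
    · exact (hleafne (b 1) (hbX 1 le_rfl (by omega))).2.1 hh.symm
    · exact (hleafne (b 2) (hbX 2 (by omega) (by omega))).2.1 hh.symm
    · exact hv.2.2.2.2.1 hh.symm
    · exact hv.2.2.2.2.2.2 hh.symm
  -- helpers for sideB
  have hQBu : ∀ k, 1 ≤ k → k ≤ n - 1 → k ≠ i - 1 → (sideB n T u v (u k) ↔ k = n - 1) := by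
    intro k h1 h2 h3
    have hv := hdist k (n-1) h1 h2 h3 (by omega) le_rfl (by omega)
    simp only [sideB]
    constructor
    · rintro (hh | hh | hh | hh | hh)
      · exact absurd hh.symm ((hleafne (a (n-1)) (haX (n-1) (by omega) (by omega))).2.2 k h1 h2 h3).1
      · exact absurd hh.symm ((hleafne (a n) (haX n (by omega) le_rfl)).2.2 k h1 h2 h3).1
      · exact absurd hh.symm ((hleafne (b n) (hbX n (by omega) le_rfl)).2.2 k h1 h2 h3).1
      · exact hv.1 hh
      · exact absurd hh hv.2.2.1
    · rintro rfl
      exact Or.inr (Or.inr (Or.inr (Or.inl rfl)))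
  have hQBv : ∀ k, 1 ≤ k → k ≤ n - 1 → k ≠ i - 1 → (sideB n T u v (v k) ↔ k = n - 1) := by
    intro k h1 h2 h3
    have hv := hdist k (n-1) h1 h2 h3 (by omega) le_rfl (by omega)
    have hv' := hdist (n-1) k (by omega) le_rfl (by omega) h1 h2 h3
    simp only [sideB]
    constructor
    · rintro (hh | hh | hh | hh | hh)
      · exact absurd hh.symm ((hleafne (a (n-1)) (haX (n-1) (by omega) (by omega))).2.2 k h1 h2 h3).2
      · exact absurd hh.symm ((hleafne (a n) (haX n (by omega) le_rfl)).2.2 k h1 h2 h3).2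
      · exact absurd hh.symm ((hleafne (b n) (hbX n (by omega) le_rfl)).2.2 k h1 h2 h3).2
      · exact absurd hh.symm hv'.2.2.1
      · exact hv.2.1 hh
    · rintro rfl
      exact Or.inr (Or.inr (Or.inr (Or.inr rfl)))
  have hQBla : ∀ j, 1 ≤ j → j ≤ n → (sideB n T u v (T.leaf (a j)) ↔ (j = n - 1 ∨ j = n)) := by
    intro j h1 h2
    simp only [sideB]
    constructor
    · rintro (hh | hh | hh | hh | hh)
      · exact Or.inl (congrArg Prod.snd (hinj (haX j h1 h2) (haX (n-1) (by omega) (by omega)) hh))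
      · exact Or.inr (congrArg Prod.snd (hinj (haX j h1 h2) (haX n (by omega) le_rfl) hh))
      · exact absurd (congrArg Prod.fst (hinj (haX j h1 h2) (hbX n (by omega) le_rfl) hh))
          Bool.false_ne_true
      · exact absurd hh ((hleafne (a j) (haX j h1 h2)).2.2 (n-1) (by omega) le_rfl (by omega)).1
      · exact absurd hh ((hleafne (a j) (haX j h1 h2)).2.2 (n-1) (by omega) le_rfl (by omega)).2
    · rintro (rfl | rfl)
      · exact Or.inl rfl
      · exact Or.inr (Or.inl rfl)
  have hQBlb : ∀ j, 1 ≤ j → j ≤ n → (sideB n T u v (T.leaf (b j)) ↔ j = n) := by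
    intro j h1 h2
    simp only [sideB]
    constructor
    · rintro (hh | hh | hh | hh | hh)
      · exact absurd (congrArg Prod.fst (hinj (hbX j h1 h2) (haX (n-1) (by omega) (by omega)) hh))
          (fun hh => Bool.false_ne_true hh.symm)
      · exact absurd (congrArg Prod.fst (hinj (hbX j h1 h2) (haX n (by omega) le_rfl) hh))
          (fun hh => Bool.false_ne_true hh.symm)
      · exact congrArg Prod.snd (hinj (hbX j h1 h2) (hbX n (by omega) le_rfl) hh)
      · exact absurd hh ((hleafne (b j) (hbX j h1 h2)).2.2 (n-1) (by omega) le_rfl (by omega)).1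
      · exact absurd hh ((hleafne (b j) (hbX j h1 h2)).2.2 (n-1) (by omega) le_rfl (by omega)).2
    · rintro rfl
      exact Or.inr (Or.inr (Or.inl rfl))
  have hQBuA : ¬ sideB n T u v uA := by
    have hv := hdist (n-1) (n-1) (by omega) le_rfl (by omega) (by omega) le_rfl (by omega)
    simp only [sideB]
    rintro (hh | hh | hh | hh | hh)
    · exact (hleafne (a (n-1)) (haX (n-1) (by omega) (by omega))).1 hh.symm
    · exact (hleafne (a n) (haX n (by omega) le_rfl)).1 hh.symm
    · exact (hleafne (b n) (hbX n (by omega) le_rfl)).1 hh.symm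
    · exact hv.2.2.2.1 hh.symm
    · exact hv.2.2.2.2.2.1 hh.symm
  have hQBuB : ¬ sideB n T u v uB := by
    have hv := hdist (n-1) (n-1) (by omega) le_rfl (by omega) (by omega) le_rfl (by omega)
    simp only [sideB]
    rintro (hh | hh | hh | hh | hh)
    · exact (hleafne (a (n-1)) (haX (n-1) (by omega) (by omega))).2.1 hh.symm
    · exact (hleafne (a n) (haX n (by omega) le_rfl)).2.1 hh.symm
    · exact (hleafne (b n) (hbX n (by omega) le_rfl)).2.1 hh.symm
    · exact hv.2.2.2.2.1 hh.symm
    · exact hv.2.2.2.2.2.2 hh.symm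
  -- classification of crossing edges for sideA
  have HA' : ∀ w w', AdjSpecJag n i T u v uA uB w w' →
      ¬(sideA T u v w ↔ sideA T u v w') →
      (w = u 1 ∧ w' = (if i = 3 then uA else u 2)) := by
    intro w w' hspec hc
    unfold AdjSpecJag at hspec
    rcases hspec with ⟨rfl, rfl⟩ | ⟨k, hk1, hk2, rfl, rfl⟩ | ⟨rfl, rfl⟩ | ⟨rfl, rfl⟩ |
      ⟨rfl, rfl⟩ | ⟨k, hk1, hk2, rfl, rfl⟩ | ⟨rfl, rfl⟩ | ⟨k, hk1, hk2, hk3, rfl, rfl⟩ |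
      ⟨hpar, rfl, rfl⟩ | ⟨hpar, rfl, rfl⟩ | ⟨hpar, rfl, rfl⟩ | ⟨hpar, rfl, rfl⟩ |
      ⟨k, hk1, hk2, hk3, rfl, rfl | rfl⟩ | ⟨k, hk1, hk2, hk3, rfl, rfl | rfl⟩ |
      ⟨k, hk1, hk2, hk3, rfl, rfl | rfl⟩ | ⟨k, hk1, hk2, hk3, rfl, rfl | rfl⟩
    · exact absurd ((hPAla 1 le_rfl (by omega)).trans
        (hPAu 1 le_rfl (by omega) (by omega)).symm) hc
    · have hk : k = 1 := by
        by_contra hne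
        exact hc (iff_of_false
          (by simp only [hPAu k hk1 (by omega) (by omega)]; omega)
          (by simp only [hPAu (k+1) (by omega) (by omega) (by omega)]; omega))
      refine ⟨by rw [hk], ?_⟩
      rw [if_neg (show ¬ i = 3 by omega), show k + 1 = 2 by omega]
    · have h3 : i = 3 := by
        by_contra hne
        exact hc (iff_of_false
          (by simp only [hPAu (i-2) (by omega) (by omega) (by omega)]; omega) hPAuA)
      exact ⟨by rw [show i - 2 = 1 by omega], by rw [if_pos h3]⟩
    · exact absurd (iff_of_false hPAuA hPAuB) hc
    · exact absurd (iff_of_false hPAuB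
        (by simp only [hPAu i (by omega) hi' (by omega)]; omega)) hc
    · exact absurd (by simp only [hPAu k (by omega) (by omega) (by omega),
        hPAu (k+1) (by omega) (by omega) (by omega)]; omega) hc
    · exact absurd (by simp only [hPAu (n-1) (by omega) le_rfl (by omega),
        hPAlb n (by omega) le_rfl]; omega) hc
    · exact absurd ((hPAu k hk1 hk2 hk3).trans (hPAv k hk1 hk2 hk3).symm) hc
    · exact absurd (iff_of_false hPAuA
        (by simp only [hPAla i (by omega) (by omega)]; omega)) hc
    · exact absurd (iff_of_false hPAuB
        (by simp only [hPAlb (i-1) (by omega) (by omega)]; omega)) hc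
    · exact absurd (iff_of_false hPAuA
        (by simp only [hPAlb i (by omega) (by omega)]; omega)) hc
    · exact absurd (iff_of_false hPAuB
        (by simp only [hPAla (i-1) (by omega) (by omega)]; omega)) hc
    · exact absurd (by simp only [hPAv k hk1 (by omega) (by omega),
        hPAlb k hk1 (by omega)]; omega) hc
    · exact absurd (by simp only [hPAv k hk1 (by omega) (by omega),
        hPAlb (k+1) (by omega) (by omega)]; omega) hc
    · exact absurd ((hPAv k hk1 (by omega) (by omega)).trans
        (hPAla k hk1 (by omega)).symm) hc
    · exact absurd (by simp only [hPAv k hk1 (by omega) (by omega),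
        hPAla (k+1) (by omega) (by omega)]; omega) hc
    · exact absurd ((hPAv k (by omega) hk2 (by omega)).trans
        (hPAla k (by omega) (by omega)).symm) hc
    · exact absurd (by simp only [hPAv k (by omega) hk2 (by omega),
        hPAla (k+1) (by omega) (by omega)]; omega) hc
    · exact absurd (by simp only [hPAv k (by omega) hk2 (by omega),
        hPAlb k (by omega) (by omega)]; omega) hc
    · exact absurd (by simp only [hPAv k (by omega) hk2 (by omega),
        hPAlb (k+1) (by omega) (by omega)]; omega) hc
  -- classification of crossing edges for sideB
  have HB' : ∀ w w', AdjSpecJag n i T u v uA uB w w' →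
      ¬(sideB n T u v w ↔ sideB n T u v w') →
      (w = (if i = n - 1 then uB else u (n-2)) ∧ w' = u (n - 1)) := by
    intro w w' hspec hc
    unfold AdjSpecJag at hspec
    rcases hspec with ⟨rfl, rfl⟩ | ⟨k, hk1, hk2, rfl, rfl⟩ | ⟨rfl, rfl⟩ | ⟨rfl, rfl⟩ |
      ⟨rfl, rfl⟩ | ⟨k, hk1, hk2, rfl, rfl⟩ | ⟨rfl, rfl⟩ | ⟨k, hk1, hk2, hk3, rfl, rfl⟩ |
      ⟨hpar, rfl, rfl⟩ | ⟨hpar, rfl, rfl⟩ | ⟨hpar, rfl, rfl⟩ | ⟨hpar, rfl, rfl⟩ |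
      ⟨k, hk1, hk2, hk3, rfl, rfl | rfl⟩ | ⟨k, hk1, hk2, hk3, rfl, rfl | rfl⟩ |
      ⟨k, hk1, hk2, hk3, rfl, rfl | rfl⟩ | ⟨k, hk1, hk2, hk3, rfl, rfl | rfl⟩
    · exact absurd (by simp only [hQBla 1 le_rfl (by omega),
        hQBu 1 le_rfl (by omega) (by omega)]; omega) hc
    · exact absurd (by simp only [hQBu k hk1 (by omega) (by omega),
        hQBu (k+1) (by omega) (by omega) (by omega)]; omega) hc
    · exact absurd (iff_of_false
        (by simp only [hQBu (i-2) (by omega) (by omega) (by omega)]; omega) hQBuA) hc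
    · exact absurd (iff_of_false hQBuA hQBuB) hc
    · have h5 : i = n - 1 := by
        by_contra hne
        exact hc (iff_of_false hQBuB
          (by simp only [hQBu i (by omega) hi' (by omega)]; omega))
      exact ⟨by rw [if_pos h5], by rw [h5]⟩
    · have h6 : k = n - 2 := by
        by_contra hne
        exact hc (iff_of_false
          (by simp only [hQBu k (by omega) (by omega) (by omega)]; omega)
          (by simp only [hQBu (k+1) (by omega) (by omega) (by omega)]; omega))
      refine ⟨?_, by rw [show k + 1 = n - 1 by omega]⟩
      rw [if_neg (show ¬ i = n - 1 by omega), h6]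
    · exact absurd (iff_of_true ((hQBu (n-1) (by omega) le_rfl (by omega)).mpr rfl)
        ((hQBlb n (by omega) le_rfl).mpr rfl)) hc
    · exact absurd ((hQBu k hk1 hk2 hk3).trans (hQBv k hk1 hk2 hk3).symm) hc
    · exact absurd (iff_of_false hQBuA
        (by simp only [hQBla i (by omega) (by omega)]; omega)) hc
    · exact absurd (iff_of_false hQBuB
        (by simp only [hQBlb (i-1) (by omega) (by omega)]; omega)) hc
    · exact absurd (iff_of_false hQBuA
        (by simp only [hQBlb i (by omega) (by omega)]; omega)) hc
    · exact absurd (iff_of_false hQBuB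
        (by simp only [hQBla (i-1) (by omega) (by omega)]; omega)) hc
    · exact absurd (by simp only [hQBv k hk1 (by omega) (by omega),
        hQBlb k hk1 (by omega)]; omega) hc
    · exact absurd (by simp only [hQBv k hk1 (by omega) (by omega),
        hQBlb (k+1) (by omega) (by omega)]; omega) hc
    · exact absurd (by simp only [hQBv k hk1 (by omega) (by omega),
        hQBla k hk1 (by omega)]; omega) hc
    · exact absurd (by simp only [hQBv k hk1 (by omega) (by omega),
        hQBla (k+1) (by omega) (by omega)]; omega) hc
    · exact absurd (by simp only [hQBv k (by omega) hk2 (by omega),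
        hQBla k (by omega) (by omega)]; omega) hc
    · exact absurd (by simp only [hQBv k (by omega) hk2 (by omega),
        hQBla (k+1) (by omega) (by omega)]; omega) hc
    · exact absurd (by simp only [hQBv k (by omega) hk2 (by omega),
        hQBlb k (by omega) (by omega)]; omega) hc
    · exact absurd (by simp only [hQBv k (by omega) hk2 (by omega),
        hQBlb (k+1) (by omega) (by omega)]; omega) hc
  have HA : ∀ w w' : T.V, T.G.Adj w w' → ¬(sideA T u v w ↔ sideA T u v w') →
      (w = u 1 ∧ w' = (if i = 3 then uA else u 2)) ∨
      (w = (if i = 3 then uA else u 2) ∧ w' = u 1) := by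
    intro w w' hA hc
    rcases (hadj w w').mp hA with hs | hs
    · exact Or.inl (HA' w w' hs hc)
    · obtain ⟨e1, e2⟩ := HA' w' w hs (fun hh => hc hh.symm)
      exact Or.inr ⟨e2, e1⟩
  have HB : ∀ w w' : T.V, T.G.Adj w w' → ¬(sideB n T u v w ↔ sideB n T u v w') →
      (w = (if i = n - 1 then uB else u (n-2)) ∧ w' = u (n - 1)) ∨
      (w = u (n - 1) ∧ w' = (if i = n - 1 then uB else u (n-2))) := by
    intro w w' hA hc
    rcases (hadj w w').mp hA with hs | hs
    · exact Or.inl (HB' w w' hs hc)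
    · obtain ⟨e1, e2⟩ := HB' w' w hs (fun hh => hc hh.symm)
      exact Or.inr ⟨e2, e1⟩
  -- leaf colour agrees with the character values
  have hA01 : ∀ x ∈ Xset n, (sideA T u v (T.leaf x) ↔ OmA x = 0) ∧ OmA x ≤ 1 := by
    rintro ⟨bb, j⟩ hx
    have h1 : 1 ≤ j := hx.1
    have h2 : j ≤ n := hx.2
    cases bb
    · have hd : sideA T u v (T.leaf ((false, j) : Lbl)) ↔ j = 1 := hPAla j h1 h2
      have ho : OmA ((false, j) : Lbl) = if j = 1 then 0 else 1 := rfl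
      rw [hd, ho]
      constructor
      · split <;> omega
      · split <;> omega
    · have hd : sideA T u v (T.leaf ((true, j) : Lbl)) ↔ (j = 1 ∨ j = 2) := hPAlb j h1 h2
      have ho : OmA ((true, j) : Lbl) = if j ≤ 2 then 0 else 1 := rfl
      rw [hd, ho]
      constructor
      · split <;> omega
      · split <;> omega
  have hB01 : ∀ x ∈ Xset n, (sideB n T u v (T.leaf x) ↔ OmB n x = 1) ∧ OmB n x ≤ 1 := by
    rintro ⟨bb, j⟩ hx
    have h1 : 1 ≤ j := hx.1
    have h2 : j ≤ n := hx.2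
    cases bb
    · have hd : sideB n T u v (T.leaf ((false, j) : Lbl)) ↔ (j = n - 1 ∨ j = n) :=
        hQBla j h1 h2
      have ho : OmB n ((false, j) : Lbl) = if j + 1 ≥ n then 1 else 0 := rfl
      rw [hd, ho]
      constructor
      · split <;> omega
      · split <;> omega
    · have hd : sideB n T u v (T.leaf ((true, j) : Lbl)) ↔ j = n := hQBlb j h1 h2
      have ho : OmB n ((true, j) : Lbl) = if j = n then 1 else 0 := rfl
      rw [hd, ho]
      constructor
      · split <;> omega
      · split <;> omega
  have hlfA : ∀ x ∈ Xset n, ∀ y ∈ Xset n,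
      ((sideA T u v (T.leaf x) ↔ sideA T u v (T.leaf y)) ↔ OmA x = OmA y) := by
    intro x hx y hy
    obtain ⟨ex, vx⟩ := hA01 x hx
    obtain ⟨ey, vy⟩ := hA01 y hy
    rw [ex, ey]
    omega
  have hlfB : ∀ x ∈ Xset n, ∀ y ∈ Xset n,
      ((sideB n T u v (T.leaf x) ↔ sideB n T u v (T.leaf y)) ↔ OmB n x = OmB n y) := by
    intro x hx y hy
    obtain ⟨ex, vx⟩ := hB01 x hx
    obtain ⟨ey, vy⟩ := hB01 y hy
    rw [ex, ey]
    omega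
  exact ⟨displays_of_cut T OmA (sideA T u v) (u 1) (if i = 3 then uA else u 2) HA hlfA,
    displays_of_cut T (OmB n) (sideB n T u v) (if i = n - 1 then uB else u (n-2))
      (u (n - 1)) HB hlfB⟩

end PP
end

section
/- For even n ≥ 6 and any 3 ≤ i, j ≤ n-1 with j ≠ i, the lobster tree A^iB displays the character φ_j. -/
namespace SimpleGraph

variable {V α : Type*} {G : SimpleGraph V} {f : V → α} {s : α} {x y z : V}

def JoinedIn (G : SimpleGraph V) (f : V → α) (s : α) (x y : V) : Prop :=
  ∃ p : G.Walk x y, ∀ w ∈ p.support, f w = s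

namespace JoinedIn

theorem refl (hx : f x = s) : G.JoinedIn f s x x :=
  ⟨.nil, by simpa using hx⟩

theorem symm (h : G.JoinedIn f s x y) : G.JoinedIn f s y x := by
  obtain ⟨p, hp⟩ := h
  exact ⟨p.reverse, by simpa using hp⟩

theorem trans (hxy : G.JoinedIn f s x y) (hyz : G.JoinedIn f s y z) : G.JoinedIn f s x z := by
  obtain ⟨p, hp⟩ := hxy
  obtain ⟨q, hq⟩ := hyz
  refine ⟨p.append q, fun w hw => ?_⟩
  rcases (Walk.mem_support_append_iff p q).1 hw with hw | hw
  exacts [hp w hw, hq w hw]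

end JoinedIn

theorem Adj.joinedIn (h : G.Adj x y) (hx : f x = s) (hy : f y = s) : G.JoinedIn f s x y :=
  ⟨h.toWalk, by simp [hx, hy]⟩

end SimpleGraph

namespace PP

open SimpleGraph

/-- In a tree the minimal subtree spanned by two leaves lies on every walk between them, so the
subtrees of distinct states land in distinct fibres of `f`. -/
theorem displays_of_joinedIn {L : Type} {X : Set L} (T : PhyloTree X) (χ : L → ℕ) (f : T.V → ℕ)
    (h : ∀ x ∈ X, ∀ y ∈ X, χ x = χ y → T.G.JoinedIn f (χ x) (T.leaf x) (T.leaf y)) :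
    displays T χ := by
  classical
  have subtree_subset : ∀ s, subtree T {x | χ x = s} ⊆ f ⁻¹' {s} := by
    rintro s w ⟨x, ⟨rfl, hx⟩, y, ⟨hxy, hy⟩, p, hp, hw⟩
    obtain ⟨q, hq⟩ := h x hx y hy hxy.symm
    have hpq : p = q.bypass := (T.isTree.existsUnique_path _ _).unique hp q.bypass_isPath
    exact hq w (q.support_bypass_subset_support (hpq ▸ hw))
  intro s t hst
  exact ((Set.disjoint_singleton.2 hst).preimage f).mono (subtree_subset s) (subtree_subset t)

namespace LobsterJag

/-- Position `c` on the central path `a₁, u₁, …, u_{i-2}, u_A, u_B, u_i, …, u_{n-1}, bₙ`. -/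
def spine (n i : ℕ) {X : Set Lbl} (T : PhyloTree X) (u : ℕ → T.V) (uA uB : T.V) (c : ℕ) : T.V :=
  if c = 0 then T.leaf (a 1) else if c = i - 1 then uA else if c = i then uB
  else if c ≤ n then u (if c < i then c else c - 1) else T.leaf (b n)

/-- The position of `u k` on the central path. -/
def uPos (i k : ℕ) : ℕ := if k < i then k else k + 1

/-- The `k` such that `v k` carries the leaf `p`, for the leaves that hang off some `v k`. -/
def pendant (i : ℕ) (p : Lbl) : ℕ :=
  if (p.2 + p.1.toNat + if p.2 < i then 0 else 1) % 2 = 0 then p.2 else p.2 - 1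

/-- The position on the central path closest to the leaf `p`. -/
def anchor (n i : ℕ) (p : Lbl) : ℕ :=
  if p = a 1 then 0
  else if p = b n then n + 1
  else if p.2 = i ∧ (i + p.1.toNat) % 2 = 0 then i - 1
  else if p.2 = i - 1 ∧ (i + p.1.toNat) % 2 = 1 then i
  else uPos i (pendant i p)

/-- The state of `φ_j` that owns the position `c` of the central path. -/
def zone (j c : ℕ) : ℕ := if c < j then 0 else 5

section Spine

variable {n i : ℕ} {X : Set Lbl} {T : PhyloTree X} {u : ℕ → T.V} {uA uB : T.V}

theorem spine_zero : spine n i T u uA uB 0 = T.leaf (a 1) := by simp [spine]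

theorem spine_pred (hi : 2 ≤ i) : spine n i T u uA uB (i - 1) = uA := by
  unfold spine; split_ifs <;> first | rfl | contradiction | omega

theorem spine_self (hi : 1 ≤ i) : spine n i T u uA uB i = uB := by
  unfold spine; split_ifs <;> first | rfl | contradiction | omega

theorem spine_of_lt {c : ℕ} (hc : 1 ≤ c) (hci : c < i - 1) (hcn : c ≤ n) :
    spine n i T u uA uB c = u c := by
  unfold spine; split_ifs <;> first | rfl | contradiction | omega

theorem spine_of_gt {c : ℕ} (hic : i < c) (hcn : c ≤ n) :
    spine n i T u uA uB c = u (c - 1) := by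
  unfold spine; split_ifs <;> first | rfl | contradiction | omega

theorem spine_uPos {k : ℕ} (hk : 1 ≤ k) (hkn : k ≤ n - 1) (hki : k ≠ i - 1) :
    spine n i T u uA uB (uPos i k) = u k := by
  unfold uPos
  split_ifs
  · exact spine_of_lt hk (by omega) (by omega)
  · exact spine_of_gt (by omega) (by omega)

theorem spine_succ (hin : i ≤ n) : spine n i T u uA uB (n + 1) = T.leaf (b n) := by
  unfold spine; split_ifs <;> first | rfl | contradiction | omega

end Spine

section Arithmetic

variable {n i j : ℕ} {p : Lbl}

theorem phi_a_one (hj : 3 ≤ j) : phi j (a 1) = 0 := by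
  simp only [phi, a, cond_false]
  unfold phiMain phiSide
  split_ifs <;> omega

theorem phi_b_self (hn : Even n) (hjn : j < n) : phi j (b n) = 5 := by
  obtain ⟨r, rfl⟩ := hn
  simp only [phi, b, cond_true]
  unfold phiMain phiSide
  split_ifs <;> omega

theorem phi_eq_zero (h : phi j p = 0) :
    (p.2 + 1 ≤ j ∧ (j + p.1.toNat) % 2 = 1) ∨ p.2 + 3 ≤ j := by
  obtain ⟨t, m⟩ := p
  cases t <;> simp only [phi, phiMain, phiSide, cond_false, cond_true, Bool.toNat_false,
    Bool.toNat_true] at h ⊢ <;> split_ifs at h <;> omega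

theorem phi_eq_five (h : phi j p = 5) :
    j + 2 ≤ p.2 ∨ (j ≤ p.2 ∧ (j + p.1.toNat) % 2 = 0) := by
  obtain ⟨t, m⟩ := p
  cases t <;> simp only [phi, phiMain, phiSide, cond_false, cond_true, Bool.toNat_false,
    Bool.toNat_true] at h ⊢ <;> split_ifs at h <;> omega

/-- The states `1, …, 4` of `φ_j` are single leaves. -/
theorem phi_singleton_spec (h0 : phi j p ≠ 0) (h5 : phi j p ≠ 5) :
    p.2 + 3 = j + phi j p ∧ (j + p.1.toNat + if phi j p ≤ 2 then 0 else 1) % 2 = 0 := by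
  obtain ⟨t, m⟩ := p
  cases t <;> simp only [phi, phiMain, phiSide, cond_false, cond_true, Bool.toNat_false,
    Bool.toNat_true] at * <;> split_ifs at * <;> omega

theorem eq_of_phi_eq {q : Lbl} (hpq : phi j p = phi j q) (h0 : phi j p ≠ 0) (h5 : phi j p ≠ 5) :
    p = q := by
  have hp := phi_singleton_spec h0 h5
  have hq := phi_singleton_spec (hpq ▸ h0) (hpq ▸ h5)
  rw [← hpq] at hq
  obtain ⟨t, m⟩ := p
  obtain ⟨t', m'⟩ := q
  cases t <;> cases t' <;>
    simp only [Bool.toNat_false, Bool.toNat_true, Prod.mk.injEq, true_and, Bool.false_eq_true,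
      Bool.true_eq_false, false_and] at hp hq ⊢ <;>
    split_ifs at hp hq <;> omega

theorem anchor_cases (hn : Even n) (hp : p ∈ Xset n) :
    anchor n i p = p.2 ∨
    anchor n i p = p.2 + 1 ∧ ((p.2 + p.1.toNat) % 2 = 1 ∨ p.2 + 1 = i) ∨
    anchor n i p + 1 = p.2 ∧ ((p.2 + p.1.toNat) % 2 = 1 ∨ p.2 = i) := by
  obtain ⟨r, rfl⟩ := hn
  obtain ⟨t, m⟩ := p
  simp only [Xset, Set.mem_ofPred_eq] at hp
  cases t <;> simp only [anchor, pendant, uPos, a, b, Prod.mk.injEq, Bool.toNat_false,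
    Bool.toNat_true, true_and, false_and, Bool.false_eq_true, Bool.true_eq_false, ↓reduceIte] <;>
    split_ifs <;> omega

theorem anchor_le (hn : Even n) (hp : p ∈ Xset n) : anchor n i p ≤ n + 1 := by
  have := hp.2
  rcases anchor_cases (i := i) hn hp with h | h | h <;> omega

theorem phi_eq_zone_anchor (hn : Even n) (hij : j ≠ i) (hp : p ∈ Xset n)
    (hphi : phi j p = 0 ∨ phi j p = 5) : phi j p = zone j (anchor n i p) := by
  have hanchor := anchor_cases (i := i) hn hp
  rcases hphi with h0 | h5
  · have := phi_eq_zero h0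
    rw [h0, zone, if_pos (by omega)]
  · have := phi_eq_five h5
    rw [h5, zone, if_neg (by omega)]

theorem pendant_spec {t : Bool} {m k : ℕ} (hn : Even n) (hi : 3 ≤ i) (hin : i ≤ n - 1)
    (hm : (t, m) ∈ Xset n) (h1 : (t, m) ≠ a 1) (h2 : (t, m) ≠ b n)
    (h3 : ¬(m = i ∧ (i + t.toNat) % 2 = 0)) (h4 : ¬(m = i - 1 ∧ (i + t.toNat) % 2 = 1))
    (hk : pendant i (t, m) = k) :
    (m = k ∨ m = k + 1) ∧
    (1 ≤ k ∧ k + 1 < i ∧ (k + t.toNat) % 2 = 0 ∨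
      i - 1 < k ∧ k ≤ n - 1 ∧ (k + t.toNat) % 2 = 1) := by
  subst hk
  obtain ⟨r, rfl⟩ := hn
  simp only [Xset, Set.mem_ofPred_eq] at hm
  cases t <;> simp only [pendant, a, b, ne_eq, Prod.mk.injEq, Bool.toNat_false, Bool.toNat_true,
    true_and, false_and, reduceCtorEq, not_false_eq_true] at * <;> split_ifs <;> omega

end Arithmetic

/-- The vertices of `A^iB`, named as in the paper. -/
inductive Node
  | leaf (p : Lbl)
  | u (k : ℕ)
  | v (k : ℕ)
  | uA
  | uB

namespace Node

instance : Inhabited Node := ⟨uA⟩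

def Valid (n i : ℕ) : Node → Prop
  | leaf p => p ∈ Xset n
  | u k | v k => 1 ≤ k ∧ k ≤ n - 1 ∧ k ≠ i - 1
  | uA | uB => True

def vertex {n : ℕ} (T : PhyloTree (Xset n)) (u v : ℕ → T.V) (uA uB : T.V) : Node → T.V
  | leaf p => T.leaf p
  | Node.u k => u k
  | Node.v k => v k
  | Node.uA => uA
  | Node.uB => uB

def state (i j : ℕ) : Node → ℕ
  | leaf p => phi j p
  | u k | v k => zone j (uPos i k)
  | uA => zone j (i - 1)
  | uB => zone j i

end Node

/-- `Node.state` transported to the vertices of `T` (with a junk value off the named vertices). -/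
noncomputable def colour (n i j : ℕ) (T : PhyloTree (Xset n)) (u v : ℕ → T.V) (uA uB : T.V)
    (w : T.V) : ℕ :=
  (Function.invFunOn (Node.vertex T u v uA uB) {q | q.Valid n i} w).state i j

end LobsterJag

open LobsterJag

namespace IsLobsterJag

variable {n i j : ℕ} {T : PhyloTree (Xset n)} {u v : ℕ → T.V} {uA uB : T.V}
  (h : IsLobsterJag n i T u v uA uB)
include h

/-- `AdjSpecJag` lists the sixteen kinds of edges of `A^iB` as a right-nested disjunction, so the
proofs below pick the kind they need with `iterate k right`. -/
theorem adj {w w' : T.V} (hw : AdjSpecJag n i T u v uA uB w w') : T.G.Adj w w' :=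
  (h.2.2.2.2 w w').2 (.inl hw)

theorem adj_spine (hi : 3 ≤ i) (hin : i ≤ n - 1) {c : ℕ} (hc : c ≤ n) :
    T.G.Adj (spine n i T u uA uB c) (spine n i T u uA uB (c + 1)) := by
  apply h.adj
  unfold AdjSpecJag
  have hcases : c = 0 ∨ (1 ≤ c ∧ c + 1 ≤ i - 2) ∨ c = i - 2 ∨ c = i - 1 ∨ c = i ∨
      (i + 1 ≤ c ∧ c ≤ n - 1) ∨ c = n := by omega
  rcases hcases with rfl | ⟨hc1, hc2⟩ | rfl | rfl | rfl | ⟨hc1, hc2⟩ | rfl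
  · rw [spine_zero, spine_of_lt le_rfl (by omega) (by omega)]
    exact .inl ⟨rfl, rfl⟩
  · rw [spine_of_lt hc1 (by omega) (by omega), spine_of_lt (by omega) (by omega) (by omega)]
    exact .inr <| .inl ⟨c, hc1, hc2, rfl, rfl⟩
  · rw [spine_of_lt (by omega) (by omega) (by omega), show i - 2 + 1 = i - 1 by omega,
      spine_pred (by omega)]
    iterate 2 right
    exact .inl ⟨rfl, rfl⟩
  · rw [spine_pred (by omega), Nat.sub_add_cancel (by omega), spine_self (by omega)]
    iterate 3 right
    exact .inl ⟨rfl, rfl⟩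
  · rw [spine_self (by omega), spine_of_gt (by omega) (by omega), Nat.add_sub_cancel]
    iterate 4 right
    exact .inl ⟨rfl, rfl⟩
  · rw [spine_of_gt (by omega) (by omega), spine_of_gt (by omega) (by omega)]
    iterate 5 right
    exact .inl ⟨c - 1, by omega, by omega, rfl, congrArg u (by omega)⟩
  · rw [spine_of_gt (by omega) le_rfl, spine_succ (by omega)]
    iterate 6 right
    exact .inl ⟨rfl, rfl⟩

theorem adj_u_v {k : ℕ} (hk : 1 ≤ k) (hkn : k ≤ n - 1) (hki : k ≠ i - 1) :
    T.G.Adj (u k) (v k) := by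
  apply h.adj
  iterate 7 right
  exact .inl ⟨k, hk, hkn, hki, rfl, rfl⟩

theorem adj_uA_leaf {t : Bool} (ht : (i + t.toNat) % 2 = 0) : T.G.Adj uA (T.leaf (t, i)) := by
  apply h.adj
  cases t <;> simp only [Bool.toNat_false, Bool.toNat_true, add_zero] at ht
  · iterate 8 right
    exact .inl ⟨ht, rfl, rfl⟩
  · iterate 10 right
    exact .inl ⟨by omega, rfl, rfl⟩

theorem adj_uB_leaf {t : Bool} (ht : (i + t.toNat) % 2 = 1) :
    T.G.Adj uB (T.leaf (t, i - 1)) := by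
  apply h.adj
  cases t <;> simp only [Bool.toNat_false, Bool.toNat_true, add_zero] at ht
  · iterate 11 right
    exact .inl ⟨ht, rfl, rfl⟩
  · iterate 9 right
    exact .inl ⟨by omega, rfl, rfl⟩

theorem adj_v_leaf_of_lt {k m : ℕ} {t : Bool} (hk : 1 ≤ k) (hki : k + 1 < i)
    (ht : (k + t.toNat) % 2 = 0) (hm : m = k ∨ m = k + 1) : T.G.Adj (v k) (T.leaf (t, m)) := by
  apply h.adj
  have hleaf : T.leaf (t, m) = T.leaf (t, k) ∨ T.leaf (t, m) = T.leaf (t, k + 1) := by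
    rcases hm with rfl | rfl <;> simp
  cases t <;> simp only [Bool.toNat_false, Bool.toNat_true, add_zero] at ht
  · iterate 13 right
    exact .inl ⟨k, hk, hki, ht, rfl, hleaf⟩
  · iterate 12 right
    exact .inl ⟨k, hk, hki, by omega, rfl, hleaf⟩

theorem adj_v_leaf_of_gt {k m : ℕ} {t : Bool} (hik : i - 1 < k) (hkn : k ≤ n - 1)
    (ht : (k + t.toNat) % 2 = 1) (hm : m = k ∨ m = k + 1) : T.G.Adj (v k) (T.leaf (t, m)) := by
  apply h.adj
  have hleaf : T.leaf (t, m) = T.leaf (t, k) ∨ T.leaf (t, m) = T.leaf (t, k + 1) := by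
    rcases hm with rfl | rfl <;> simp
  cases t <;> simp only [Bool.toNat_false, Bool.toNat_true, add_zero] at ht
  · iterate 14 right
    exact .inl ⟨k, hik, hkn, ht, rfl, hleaf⟩
  · iterate 15 right
    exact ⟨k, hik, hkn, by omega, rfl, hleaf⟩

theorem leaf_eq_or_adj_anchor (hn : Even n) (hi : 3 ≤ i) (hin : i ≤ n - 1) {p : Lbl}
    (hp : p ∈ Xset n) :
    T.leaf p = spine n i T u uA uB (anchor n i p) ∨
    T.G.Adj (T.leaf p) (spine n i T u uA uB (anchor n i p)) ∨
    ∃ k, 1 ≤ k ∧ k ≤ n - 1 ∧ k ≠ i - 1 ∧ uPos i k = anchor n i p ∧ T.G.Adj (T.leaf p) (v k) := by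
  obtain ⟨t, m⟩ := p
  unfold anchor
  split_ifs with h1 h2 h3 h4
  · exact .inl (by rw [h1, spine_zero])
  · exact .inl (by rw [h2, spine_succ (by omega)])
  · obtain ⟨rfl, ht⟩ := h3
    exact .inr <| .inl <| by rw [spine_pred (by omega)]; exact (h.adj_uA_leaf ht).symm
  · obtain ⟨rfl, ht⟩ := h4
    exact .inr <| .inl <| by rw [spine_self (by omega)]; exact (h.adj_uB_leaf ht).symm
  · obtain ⟨hkm, hside⟩ := pendant_spec hn hi hin hp h1 h2 h3 h4 rfl
    refine .inr <| .inr ?_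
    rcases hside with ⟨hk, hki, ht⟩ | ⟨hik, hkn, ht⟩
    · exact ⟨_, hk, by omega, by omega, rfl, (h.adj_v_leaf_of_lt hk hki ht hkm).symm⟩
    · exact ⟨_, by omega, hkn, by omega, rfl, (h.adj_v_leaf_of_gt hik hkn ht hkm).symm⟩

theorem vertex_injOn : Set.InjOn (Node.vertex T u v uA uB) {q | q.Valid n i} := by
  obtain ⟨hint, hAB, hleaf, -, -⟩ := h
  rintro (p | k | k | _ | _) hq (p' | k' | k' | _ | _) hq' heq <;>
    simp only [Node.vertex, Node.Valid, Set.mem_ofPred_eq] at hq hq' heq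
  all_goals first
    | rfl
    | exact congrArg _ (T.leaf_injOn hq hq' heq)
    | grind

theorem colour_vertex {q : Node} (hq : q.Valid n i) :
    colour n i j T u v uA uB (q.vertex T u v uA uB) = q.state i j := by
  rw [colour, h.vertex_injOn.leftInvOn_invFunOn hq]

theorem colour_leaf {p : Lbl} (hp : p ∈ Xset n) :
    colour n i j T u v uA uB (T.leaf p) = phi j p :=
  h.colour_vertex (q := .leaf p) hp

theorem colour_u {k : ℕ} (hk : 1 ≤ k) (hkn : k ≤ n - 1) (hki : k ≠ i - 1) :
    colour n i j T u v uA uB (u k) = zone j (uPos i k) :=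
  h.colour_vertex (q := .u k) ⟨hk, hkn, hki⟩

theorem colour_v {k : ℕ} (hk : 1 ≤ k) (hkn : k ≤ n - 1) (hki : k ≠ i - 1) :
    colour n i j T u v uA uB (v k) = zone j (uPos i k) :=
  h.colour_vertex (q := .v k) ⟨hk, hkn, hki⟩

theorem colour_spine (hn : Even n) (hi : 3 ≤ i) (hin : i ≤ n - 1) (hj : 3 ≤ j)
    (hjn : j ≤ n - 1) {c : ℕ} (hc : c ≤ n + 1) :
    colour n i j T u v uA uB (spine n i T u uA uB c) = zone j c := by
  have hcases : c = 0 ∨ (1 ≤ c ∧ c < i - 1) ∨ c = i - 1 ∨ c = i ∨ (i < c ∧ c ≤ n) ∨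
      c = n + 1 := by omega
  rcases hcases with rfl | ⟨hc1, hc2⟩ | rfl | rfl | ⟨hc1, hc2⟩ | rfl
  · rw [spine_zero, h.colour_leaf ⟨le_rfl, by simp [a]; omega⟩, phi_a_one hj, zone,
      if_pos (by omega)]
  · rw [spine_of_lt hc1 hc2 (by omega), h.colour_u hc1 (by omega) (by omega), uPos,
      if_pos (by omega)]
  · rw [spine_pred (by omega)]
    exact h.colour_vertex (q := .uA) trivial
  · rw [spine_self (by omega)]
    exact h.colour_vertex (q := .uB) trivial
  · rw [spine_of_gt hc1 hc2, h.colour_u (by omega) (by omega) (by omega), uPos, if_neg (by omega),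
      Nat.sub_add_cancel (by omega)]
  · rw [spine_succ (by omega), h.colour_leaf ⟨by simp [b]; omega, le_rfl⟩,
      phi_b_self hn (by omega), zone, if_neg (by omega)]

theorem joinedIn_spine (hn : Even n) (hi : 3 ≤ i) (hin : i ≤ n - 1) (hj : 3 ≤ j)
    (hjn : j ≤ n - 1) {c d : ℕ} (hc : c ≤ n + 1) (hd : d ≤ n + 1) (hcd : zone j c = zone j d) :
    T.G.JoinedIn (colour n i j T u v uA uB) (zone j c)
      (spine n i T u uA uB c) (spine n i T u uA uB d) := by
  wlog hle : c ≤ d generalizing c d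
  · exact hcd ▸ (this hd hc hcd.symm (by omega)).symm
  induction d, hle using Nat.le_induction with
  | base => exact .refl (h.colour_spine hn hi hin hj hjn hc)
  | succ d hcd' ih =>
    have hzone : zone j c = zone j d := by unfold zone at hcd ⊢; split_ifs at hcd ⊢ <;> omega
    refine (ih (by omega) hzone).trans ((h.adj_spine hi hin (by omega)).joinedIn ?_ ?_)
    · rw [h.colour_spine hn hi hin hj hjn (by omega), hzone]
    · rw [h.colour_spine hn hi hin hj hjn hd, hcd]

theorem joinedIn_leaf_anchor (hn : Even n) (hi : 3 ≤ i) (hin : i ≤ n - 1) (hj : 3 ≤ j)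
    (hjn : j ≤ n - 1) {p : Lbl} (hp : p ∈ Xset n) (hphi : phi j p = zone j (anchor n i p)) :
    T.G.JoinedIn (colour n i j T u v uA uB) (phi j p)
      (T.leaf p) (spine n i T u uA uB (anchor n i p)) := by
  have hleaf := h.colour_leaf (j := j) hp
  rcases h.leaf_eq_or_adj_anchor hn hi hin hp with heq | hadj | ⟨k, hk, hkn, hki, hpos, hadj⟩
  · exact heq ▸ .refl hleaf
  · exact hadj.joinedIn hleaf (by rw [h.colour_spine hn hi hin hj hjn (anchor_le hn hp), hphi])
  · have hv : colour n i j T u v uA uB (v k) = phi j p := by rw [h.colour_v hk hkn hki, hpos, hphi]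
    have hu : colour n i j T u v uA uB (u k) = phi j p := by rw [h.colour_u hk hkn hki, hpos, hphi]
    rw [← hpos, spine_uPos hk hkn hki]
    exact (hadj.joinedIn hleaf hv).trans ((h.adj_u_v hk hkn hki).symm.joinedIn hv hu)

end IsLobsterJag

theorem lobsterJag_displays_phi_general (n i j : ℕ) (hn : Even n)
    (hi : 3 ≤ i) (hi' : i ≤ n - 1) (hj : 3 ≤ j) (hj' : j ≤ n - 1) (hij : j ≠ i)
    (T : PhyloTree (Xset n)) (u v : ℕ → T.V) (uA uB : T.V)
    (h : IsLobsterJag n i T u v uA uB) :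
    displays T (phi j) := by
  refine displays_of_joinedIn T (phi j) (colour n i j T u v uA uB) fun p hp q hq hpq => ?_
  by_cases hs : phi j p = 0 ∨ phi j p = 5
  · have hp' := phi_eq_zone_anchor hn hij hp hs
    have hq' := phi_eq_zone_anchor hn hij hq (hpq ▸ hs)
    have hspine : T.G.JoinedIn (colour n i j T u v uA uB) (phi j p)
        (spine n i T u uA uB (anchor n i p)) (spine n i T u uA uB (anchor n i q)) := by
      rw [hp']
      exact h.joinedIn_spine hn hi hi' hj hj' (anchor_le hn hp) (anchor_le hn hq)
        (by rw [← hp', ← hq', hpq])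
    exact (h.joinedIn_leaf_anchor hn hi hi' hj hj' hp hp').trans
      (hspine.trans (hpq ▸ h.joinedIn_leaf_anchor hn hi hi' hj hj' hq hq').symm)
  · rw [not_or] at hs
    obtain rfl := eq_of_phi_eq hpq hs.1 hs.2
    exact .refl (h.colour_leaf hp)

theorem lobsterJag_displays_phi (n i j : ℕ) (hn : Even n) (hn6 : 6 ≤ n)
    (hi : 3 ≤ i) (hi' : i ≤ n - 1) (hj : 3 ≤ j) (hj' : j ≤ n - 1) (hij : j ≠ i)
    (T : PhyloTree (Xset n)) (u v : ℕ → T.V) (uA uB : T.V)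
    (h : IsLobsterJag n i T u v uA uB) :
    displays T (phi j) :=
  lobsterJag_displays_phi_general n i j hn hi hi' hj hj' hij T u v uA uB h

end PP
end
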